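/- arXiv:2004.07926 — 8 statements merged into one kernel-verified Lean document; each statement's English description precedes it below -/
import Mathlib

section
/- Let n ≥ 3 be an integer, κ1, κ2, κ3, κ₋₁, κ₋ ≥ 0, and let (p, q, r) be the global solution of the ODE system with admissible initial data (p0, q0, r0) ∈ (0,∞)³. Then for all t ≥ 0, p(t) + q(t) + r(t) ≤ (p0 + q0 + r0) · exp(t · max{κ1 n, κ2}). -/
/-!
In the coordinates `x = n r - p - 2 q`, `y = q - r` and with `c = κ₋ q / ((n - 2) r) ≥ 0` the
system becomes `x' = ((n - 1) κ₂ + κ₋₁) p + 2 c y - (κ₁ + κ₃ p + (n - 1) c) x` and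
`y' = κ₃ p x - 2 c y`: a cooperative linear system with nonnegative forcing, so the admissible
region `x, y ≥ 0` is forward invariant (a first-exit argument applied to `x + ε e^{Kt}` and
`y + ε e^{Kt}`). On that region
`(p + q + r)' = κ₁ x + (κ₂ - κ₋₁) p - c (n p + x) ≤ κ₁ n r + κ₂ p ≤ max (κ₁ n) κ₂ (p + q + r)`,
and Grönwall's inequality gives the bound.
-/

/-- The right-hand side of the `p`-equation. -/
noncomputable def Fp (n : ℕ) (k1 k2 k3 km1 km p q r : ℝ) : ℝ :=
  (k1 - k3 * p) * (n * r - p - 2 * q)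
    + km * q * (1 - (n - 1) * p / ((n - 2) * r)) - (k2 + km1) * p

/-- The right-hand side of the `q`-equation. -/
noncomputable def Fq (n : ℕ) (k1 k2 k3 km1 km p q r : ℝ) : ℝ :=
  k2 * p + k3 * p * (n * r - p - 2 * q) - km * q

/-- The right-hand side of the `r`-equation. -/
noncomputable def Fr (n : ℕ) (k1 k2 k3 km1 km p q r : ℝ) : ℝ :=
  k2 * p - km * q * ((n * r - 2 * q) / ((n - 2) * r))

open Set

theorem HasDerivAt.nonpos_of_forall_Ioo_le {g : ℝ → ℝ} {g' a t : ℝ} (hat : a < t)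
    (hg : HasDerivAt g g' t) (hmin : ∀ s ∈ Ioo a t, g t ≤ g s) : g' ≤ 0 := by
  have hslope := (hasDerivWithinAt_iff_tendsto_slope' (self_notMem_Iio (a := t))).1
    hg.hasDerivWithinAt
  refine le_of_tendsto hslope ?_
  filter_upwards [Ioo_mem_nhdsLT hat] with s hs
  rw [slope_def_field]
  exact div_nonpos_of_nonneg_of_nonpos (sub_nonneg.2 (hmin s hs)) (by linarith [hs.2])

theorem ContinuousOn.forall_pos_of_not_first_zero {h : ℝ → ℝ} {a b : ℝ}
    (hh : ContinuousOn h (Icc a b)) (ha : 0 < h a)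
    (hfirst : ∀ t ∈ Ioc a b, h t = 0 → ¬ ∀ s ∈ Ico a t, 0 < h s) :
    ∀ t ∈ Icc a b, 0 < h t := by
  by_contra! hneg
  set Z := Icc a b ∩ h ⁻¹' Iic 0
  have hZne : Z.Nonempty := hneg
  have hZbdd : BddBelow Z := bddBelow_Icc.mono inter_subset_left
  have ht₀ : sInf Z ∈ Z :=
    (hh.preimage_isClosed_of_isClosed isClosed_Icc isClosed_Iic).csInf_mem hZne hZbdd
  have hbefore : ∀ s ∈ Ico a (sInf Z), 0 < h s := fun s hs => by
    by_contra! hle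
    exact (csInf_le hZbdd ⟨⟨hs.1, hs.2.le.trans ht₀.1.2⟩, hle⟩).not_gt hs.2
  obtain ⟨c, hc, hc0⟩ : 0 ∈ h '' Icc a (sInf Z) :=
    intermediate_value_Icc' ht₀.1.1 (hh.mono (Icc_subset_Icc_right ht₀.1.2)) ⟨ht₀.2, ha.le⟩
  have hc_eq : c = sInf Z :=
    le_antisymm hc.2 (csInf_le hZbdd ⟨⟨hc.1, hc.2.trans ht₀.1.2⟩, hc0.le⟩)
  rw [hc_eq] at hc0
  have hat₀ : a < sInf Z := lt_of_le_of_ne ht₀.1.1 fun h => by rw [← h] at hc0; linarith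
  exact hfirst _ ⟨hat₀, ht₀.1.2⟩ hc0 hbefore

theorem forall_pos_of_strict_barrier {X Y X' Y' : ℝ → ℝ} {a b : ℝ}
    (hX : ∀ t ∈ Icc a b, HasDerivAt X (X' t) t) (hY : ∀ t ∈ Icc a b, HasDerivAt Y (Y' t) t)
    (hXa : 0 < X a) (hYa : 0 < Y a)
    (hXbar : ∀ t ∈ Ioc a b, X t = 0 → 0 ≤ Y t → 0 < X' t)
    (hYbar : ∀ t ∈ Ioc a b, Y t = 0 → 0 ≤ X t → 0 < Y' t) :
    ∀ t ∈ Icc a b, 0 < X t ∧ 0 < Y t := by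
  have hcont : ContinuousOn (fun t => min (X t) (Y t)) (Icc a b) := fun t ht =>
    ContinuousAt.continuousWithinAt ((hX t ht).continuousAt.min (hY t ht).continuousAt)
  intro t ht
  refine lt_min_iff.1 (hcont.forall_pos_of_not_first_zero (lt_min hXa hYa) ?_ t ht)
  intro t ht hzero hbefore
  have hXt : 0 ≤ X t := hzero ▸ min_le_left _ _
  have hYt : 0 ≤ Y t := hzero ▸ min_le_right _ _
  have ht' : t ∈ Icc a b := Ioc_subset_Icc_self ht
  rcases min_eq_iff.1 hzero with ⟨hX0, -⟩ | ⟨hY0, -⟩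
  · refine (hXbar t ht hX0 hYt).not_ge ((hX t ht').nonpos_of_forall_Ioo_le ht.1 fun s hs => ?_)
    exact hX0 ▸ (lt_min_iff.1 (hbefore s (Ioo_subset_Ico_self hs))).1.le
  · refine (hYbar t ht hY0 hXt).not_ge ((hY t ht').nonpos_of_forall_Ioo_le ht.1 fun s hs => ?_)
    exact hY0 ▸ (lt_min_iff.1 (hbefore s (Ioo_subset_Ico_self hs))).2.le

theorem nonneg_of_cooperative {x y x' y' α β γ δ : ℝ → ℝ} {a b : ℝ}
    (hx : ∀ t ∈ Icc a b, HasDerivAt x (x' t) t) (hy : ∀ t ∈ Icc a b, HasDerivAt y (y' t) t)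
    (hα : ∀ t ∈ Icc a b, 0 ≤ α t) (hγ : ∀ t ∈ Icc a b, 0 ≤ γ t)
    (hαc : ContinuousOn α (Icc a b)) (hβc : ContinuousOn β (Icc a b))
    (hγc : ContinuousOn γ (Icc a b)) (hδc : ContinuousOn δ (Icc a b))
    (hx' : ∀ t ∈ Icc a b, α t * y t - β t * x t ≤ x' t)
    (hy' : ∀ t ∈ Icc a b, γ t * x t - δ t * y t ≤ y' t)
    (hxa : 0 ≤ x a) (hya : 0 ≤ y a) :
    ∀ t ∈ Icc a b, 0 ≤ x t ∧ 0 ≤ y t := by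
  obtain ⟨K₁, hK₁⟩ := isCompact_Icc.bddAbove_image (hαc.sub hβc)
  obtain ⟨K₂, hK₂⟩ := isCompact_Icc.bddAbove_image (hγc.sub hδc)
  set K := max K₁ K₂
  have hK : ∀ s ∈ Icc a b, α s - β s < K + 1 ∧ γ s - δ s < K + 1 := fun s hs =>
    ⟨by linarith [show α s - β s ≤ K₁ from hK₁ (mem_image_of_mem _ hs), le_max_left K₁ K₂],
      by linarith [show γ s - δ s ≤ K₂ from hK₂ (mem_image_of_mem _ hs), le_max_right K₁ K₂]⟩
  intro t ht
  -- perturb by `ε e^{(K+1)(s-t)}`, which equals `ε` at time `t`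
  suffices ∀ ε > 0, 0 < x t + ε ∧ 0 < y t + ε from
    ⟨le_of_forall_pos_lt_add fun ε hε => by linarith [(this ε hε).1],
      le_of_forall_pos_lt_add fun ε hε => by linarith [(this ε hε).2]⟩
  intro ε hε
  set e : ℝ → ℝ := fun s => ε * Real.exp ((K + 1) * (s - t))
  have he : ∀ s, HasDerivAt e (e s * (K + 1)) s := fun s => by
    have := ((((hasDerivAt_id s).sub_const t).const_mul (K + 1)).exp).const_mul ε
    simpa [e, mul_assoc] using this
  have he_pos : ∀ s, 0 < e s := fun s => by positivity
  have key := forall_pos_of_strict_barrier (X := fun s => x s + e s) (Y := fun s => y s + e s)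
    (fun s hs => (hx s hs).add (he s)) (fun s hs => (hy s hs).add (he s))
    (by linarith [he_pos a]) (by linarith [he_pos a]) ?_ ?_ t ht
  · simpa [e] using key
  · intro s hs hX hY
    have hs' := Ioc_subset_Icc_self hs
    have hxs : x s = -e s := by linarith
    have := hx' s hs'
    rw [hxs] at this
    linarith [mul_pos (he_pos s) (sub_pos.2 (hK s hs').1), mul_nonneg (hα s hs') hY]
  · intro s hs hY hX
    have hs' := Ioc_subset_Icc_self hs
    have hys : y s = -e s := by linarith
    have := hy' s hs'
    rw [hys] at this
    linarith [mul_pos (he_pos s) (sub_pos.2 (hK s hs').2), mul_nonneg (hγ s hs') hX]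

noncomputable def couplingRate (n : ℕ) (km q r : ℝ) : ℝ :=
  km * q / ((n - 2) * r)

section Identities

variable (n : ℕ) (k1 k2 k3 km1 km p q r : ℝ)

theorem n_mul_Fr_sub_Fp_sub_two_mul_Fq (hr : ((n : ℝ) - 2) * r ≠ 0) :
    n * Fr n k1 k2 k3 km1 km p q r - Fp n k1 k2 k3 km1 km p q r
        - 2 * Fq n k1 k2 k3 km1 km p q r
      = ((n - 1) * k2 + km1) * p + 2 * couplingRate n km q r * (q - r)
        - (k1 + k3 * p + (n - 1) * couplingRate n km q r) * (n * r - p - 2 * q) := by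
  simp only [Fp, Fq, Fr, couplingRate]
  field_simp
  linear_combination (-(km * q)) * mul_inv_cancel₀ hr

theorem Fq_sub_Fr (hr : ((n : ℝ) - 2) * r ≠ 0) :
    Fq n k1 k2 k3 km1 km p q r - Fr n k1 k2 k3 km1 km p q r
      = k3 * p * (n * r - p - 2 * q) - 2 * couplingRate n km q r * (q - r) := by
  simp only [Fq, Fr, couplingRate]
  field_simp
  linear_combination (q * km) * mul_inv_cancel₀ hr

theorem Fp_add_Fq_add_Fr :
    Fp n k1 k2 k3 km1 km p q r + Fq n k1 k2 k3 km1 km p q r + Fr n k1 k2 k3 km1 km p q r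
      = k1 * (n * r - p - 2 * q) + (k2 - km1) * p
        - couplingRate n km q r * (n * p + (n * r - p - 2 * q)) := by
  simp only [Fp, Fq, Fr, couplingRate]
  ring

end Identities

theorem couplingRate_nonneg {n : ℕ} (hn : 2 < n) {km q r : ℝ} (hkm : 0 ≤ km) (hq : 0 ≤ q)
    (hr : 0 < r) : 0 ≤ couplingRate n km q r := by
  have : (2 : ℝ) < n := by exact_mod_cast hn
  unfold couplingRate
  have : 0 < ((n : ℝ) - 2) * r := mul_pos (by linarith) hr
  positivity

theorem Fp_add_Fq_add_Fr_le {n : ℕ} (hn : 2 < n) {k1 k2 k3 km1 km p q r : ℝ}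
    (hk1 : 0 ≤ k1) (hk2 : 0 ≤ k2) (hkm1 : 0 ≤ km1) (hkm : 0 ≤ km)
    (hp : 0 ≤ p) (hq : 0 ≤ q) (hr : 0 < r) (hx : 0 ≤ n * r - p - 2 * q) :
    Fp n k1 k2 k3 km1 km p q r + Fq n k1 k2 k3 km1 km p q r + Fr n k1 k2 k3 km1 km p q r
      ≤ max (k1 * n) k2 * (p + q + r) := by
  rw [Fp_add_Fq_add_Fr]
  have hc := couplingRate_nonneg hn hkm hq hr
  have hloss : 0 ≤ couplingRate n km q r * (n * p + (n * r - p - 2 * q)) :=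
    mul_nonneg hc (by positivity)
  have hM : 0 ≤ max (k1 * n) k2 := le_max_of_le_right hk2
  calc k1 * (n * r - p - 2 * q) + (k2 - km1) * p
          - couplingRate n km q r * (n * p + (n * r - p - 2 * q))
        ≤ (k1 * n) * r + k2 * p := by nlinarith
    _ ≤ max (k1 * n) k2 * r + max (k1 * n) k2 * p := by
        gcongr
        exacts [le_max_left _ _, le_max_right _ _]
    _ ≤ max (k1 * n) k2 * (p + q + r) := by nlinarith

def IsForwardSolution (n : ℕ) (k1 k2 k3 km1 km : ℝ) (p q r : ℝ → ℝ) : Prop :=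
  ∀ t, 0 ≤ t →
    HasDerivAt p (Fp n k1 k2 k3 km1 km (p t) (q t) (r t)) t ∧
    HasDerivAt q (Fq n k1 k2 k3 km1 km (p t) (q t) (r t)) t ∧
    HasDerivAt r (Fr n k1 k2 k3 km1 km (p t) (q t) (r t)) t

namespace IsForwardSolution

variable {n : ℕ} {k1 k2 k3 km1 km : ℝ} {p q r : ℝ → ℝ}

theorem hasDerivAt_sum (hsol : IsForwardSolution n k1 k2 k3 km1 km p q r) {t : ℝ} (ht : 0 ≤ t) :
    HasDerivAt (fun s => p s + q s + r s)
      (Fp n k1 k2 k3 km1 km (p t) (q t) (r t) + Fq n k1 k2 k3 km1 km (p t) (q t) (r t)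
        + Fr n k1 k2 k3 km1 km (p t) (q t) (r t)) t :=
  let ⟨hp, hq, hr⟩ := hsol t ht
  (hp.add hq).add hr

theorem admissible (hsol : IsForwardSolution n k1 k2 k3 km1 km p q r) (hn : 2 < n)
    (hk2 : 0 ≤ k2) (hk3 : 0 ≤ k3) (hkm1 : 0 ≤ km1) (hkm : 0 ≤ km)
    (hpos : ∀ t, 0 ≤ t → 0 < p t ∧ 0 < q t ∧ 0 < r t)
    (hx₀ : 0 ≤ n * r 0 - p 0 - 2 * q 0) (hy₀ : r 0 ≤ q 0) {t : ℝ} (ht : 0 ≤ t) :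
    0 ≤ n * r t - p t - 2 * q t ∧ r t ≤ q t := by
  have hn' : (2 : ℝ) < n := by exact_mod_cast hn
  have hden : ∀ s, 0 ≤ s → ((n : ℝ) - 2) * r s ≠ 0 := fun s hs =>
    (mul_pos (by linarith) (hpos s hs).2.2).ne'
  set c : ℝ → ℝ := fun s => couplingRate n km (q s) (r s)
  have hc : ∀ s, 0 ≤ s → 0 ≤ c s := fun s hs =>
    couplingRate_nonneg hn hkm (hpos s hs).2.1.le (hpos s hs).2.2
  have hcont : ∀ {f : ℝ → ℝ}, (∀ s, 0 ≤ s → ContinuousAt f s) → ContinuousOn f (Icc 0 t) :=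
    fun hf s hs => (hf s hs.1).continuousWithinAt
  have hpc : ContinuousOn p (Icc 0 t) := hcont fun s hs => (hsol s hs).1.continuousAt
  have hcc : ContinuousOn c (Icc 0 t) := hcont fun s hs =>
    (continuousAt_const.mul (hsol s hs).2.1.continuousAt).div
      (continuousAt_const.mul (hsol s hs).2.2.continuousAt) (hden s hs)
  have key := nonneg_of_cooperative (a := 0) (b := t)
    (x := fun s => n * r s - p s - 2 * q s) (y := fun s => q s - r s)
    (α := fun s => 2 * c s) (β := fun s => k1 + k3 * p s + (n - 1) * c s)
    (γ := fun s => k3 * p s) (δ := fun s => 2 * c s)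
    (fun s hs => let ⟨hp, hq, hr⟩ := hsol s hs.1; ((hr.const_mul _).sub hp).sub (hq.const_mul 2))
    (fun s hs => let ⟨_, hq, hr⟩ := hsol s hs.1; hq.sub hr)
    (fun s hs => mul_nonneg zero_le_two (hc s hs.1))
    (fun s hs => mul_nonneg hk3 (hpos s hs.1).1.le)
    (continuousOn_const.mul hcc)
    ((continuousOn_const.add (continuousOn_const.mul hpc)).add (continuousOn_const.mul hcc))
    (continuousOn_const.mul hpc) (continuousOn_const.mul hcc)
    (fun s hs => by
      have hforce : 0 ≤ ((n - 1) * k2 + km1) * p s :=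
        mul_nonneg (by nlinarith) (hpos s hs.1).1.le
      rw [n_mul_Fr_sub_Fp_sub_two_mul_Fq _ _ _ _ _ _ _ _ _ (hden s hs.1)]
      linarith)
    (fun s hs => (Fq_sub_Fr _ _ _ _ _ _ _ _ _ (hden s hs.1)).ge)
    hx₀ (sub_nonneg.2 hy₀) t ⟨ht, le_rfl⟩
  exact ⟨key.1, sub_nonneg.1 key.2⟩

end IsForwardSolution

theorem stmt_1_general (n : ℕ) (hn : 3 ≤ n) (k1 k2 k3 km1 km : ℝ)
    (hk1 : 0 ≤ k1) (hk2 : 0 ≤ k2) (hk3 : 0 ≤ k3) (hkm1 : 0 ≤ km1) (hkm : 0 ≤ km)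
    (p0 q0 r0 : ℝ)
    (hadm1 : 0 ≤ (n : ℝ) * r0 - p0 - 2 * q0) (hadm2 : r0 ≤ q0)
    (p q r : ℝ → ℝ)
    (hinit : p 0 = p0 ∧ q 0 = q0 ∧ r 0 = r0)
    (hode : ∀ t, 0 ≤ t →
      HasDerivAt p (Fp n k1 k2 k3 km1 km (p t) (q t) (r t)) t ∧
      HasDerivAt q (Fq n k1 k2 k3 km1 km (p t) (q t) (r t)) t ∧
      HasDerivAt r (Fr n k1 k2 k3 km1 km (p t) (q t) (r t)) t)
    (hpos : ∀ t, 0 ≤ t → 0 < p t ∧ 0 < q t ∧ 0 < r t) :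
    ∀ t, 0 ≤ t →
      p t + q t + r t ≤ (p0 + q0 + r0) * Real.exp (t * max (k1 * n) k2) := by
  obtain ⟨rfl, rfl, rfl⟩ := hinit
  have hsol : IsForwardSolution n k1 k2 k3 km1 km p q r := hode
  have hn2 : 2 < n := by omega
  intro t ht
  have hgronwall := le_gronwallBound_of_liminf_deriv_right_le (a := 0) (b := t) (ε := 0)
    (f := fun s => p s + q s + r s)
    (fun s hs => (hsol.hasDerivAt_sum hs.1).continuousAt.continuousWithinAt)
    (fun s hs _ => (hsol.hasDerivAt_sum hs.1).hasDerivWithinAt.liminf_right_slope_le)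
    le_rfl
    (fun s hs => by
      obtain ⟨hp, hq, hr⟩ := hpos s hs.1
      simpa using Fp_add_Fq_add_Fr_le hn2 hk1 hk2 hkm1 hkm hp.le hq.le hr
        (hsol.admissible hn2 hk2 hk3 hkm1 hkm hpos hadm1 hadm2 hs.1).1)
    t ⟨ht, le_rfl⟩
  rwa [gronwallBound_ε0, sub_zero, mul_comm _ t] at hgronwall

/-- A priori exponential bound on the total size of the aggregate. -/
theorem stmt_1 (n : ℕ) (hn : 3 ≤ n) (k1 k2 k3 km1 km : ℝ)
    (hk1 : 0 ≤ k1) (hk2 : 0 ≤ k2) (hk3 : 0 ≤ k3) (hkm1 : 0 ≤ km1) (hkm : 0 ≤ km)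
    (p0 q0 r0 : ℝ) (hp0 : 0 < p0) (hq0 : 0 < q0) (hr0 : 0 < r0)
    (hadm1 : 0 ≤ (n : ℝ) * r0 - p0 - 2 * q0) (hadm2 : r0 ≤ q0)
    (p q r : ℝ → ℝ)
    (hinit : p 0 = p0 ∧ q 0 = q0 ∧ r 0 = r0)
    (hode : ∀ t, 0 ≤ t →
      HasDerivAt p (Fp n k1 k2 k3 km1 km (p t) (q t) (r t)) t ∧
      HasDerivAt q (Fq n k1 k2 k3 km1 km (p t) (q t) (r t)) t ∧
      HasDerivAt r (Fr n k1 k2 k3 km1 km (p t) (q t) (r t)) t)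
    (hpos : ∀ t, 0 ≤ t → 0 < p t ∧ 0 < q t ∧ 0 < r t) :
    ∀ t, 0 ≤ t →
      p t + q t + r t ≤ (p0 + q0 + r0) * Real.exp (t * max (k1 * n) k2) :=
  stmt_1_general n hn k1 k2 k3 km1 km hk1 hk2 hk3 hkm1 hkm p0 q0 r0 hadm1 hadm2 p q r hinit hode
    hpos
end

section
/- Let n ≥ 3 be an integer, κ1, κ2, κ3, κ₋₁, κ₋ > 0, and suppose 0 < ᾱ < 1. Set q̂ := (n − (n−2) ᾱ)/2 and define p̄ := (κ1 κ2 (n−2) / (κ3 (κ₋ q̂ (n−1) + κ₋₁ (n−2)))) · (1−ᾱ)/ᾱ, q̄ := (κ1 κ2² (n−2) / (κ3 κ₋ (κ₋ q̂ (n−1) + κ₋₁ (n−2)))) · (1−ᾱ)/ᾱ², r̄ := q̄ / q̂. Then q̂ ∈ (1, n/2), (p̄, q̄, r̄) ∈ (0,∞)³ is admissible (n r̄ − p̄ − 2 q̄ ≥ 0 and q̄ ≥ r̄), α(q̄, r̄) = ᾱ, and (p̄, q̄, r̄) is a steady state of the ODE system, i.e. all three right-hand sides vanish at (p̄, q̄,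 r̄). -/
set_option maxHeartbeats 2000000 in
/-- Existence of the explicit non-trivial steady state when `0 < ᾱ < 1`. -/
theorem stmt_5 (n : ℕ) (hn : 3 ≤ n) (k1 k2 k3 km1 km : ℝ)
    (hk1 : 0 < k1) (hk2 : 0 < k2) (hk3 : 0 < k3) (hkm1 : 0 < km1) (hkm : 0 < km)
    (A : ℝ)
    (hA : A = (n : ℝ) / ((n : ℝ) - 2)
      + (km1 + k1 - Real.sqrt ((k1 + km1) ^ 2 + 4 * k1 * k2 * ((n : ℝ) - 1)))
          / (km * ((n : ℝ) - 1)))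
    (hA0 : 0 < A) (hA1 : A < 1)
    (qh pb qb rb : ℝ)
    (hqh : qh = ((n : ℝ) - ((n : ℝ) - 2) * A) / 2)
    (hpb : pb = k1 * k2 * ((n : ℝ) - 2) / (k3 * (km * qh * ((n : ℝ) - 1) + km1 * ((n : ℝ) - 2)))
      * ((1 - A) / A))
    (hqb : qb = k1 * k2 ^ 2 * ((n : ℝ) - 2)
        / (k3 * km * (km * qh * ((n : ℝ) - 1) + km1 * ((n : ℝ) - 2)))
      * ((1 - A) / A ^ 2))
    (hrb : rb = qb / qh) :
    (1 < qh ∧ qh < (n : ℝ) / 2) ∧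
    (0 < pb ∧ 0 < qb ∧ 0 < rb) ∧
    (0 ≤ (n : ℝ) * rb - pb - 2 * qb ∧ rb ≤ qb) ∧
    ((n : ℝ) * rb - 2 * qb) / (((n : ℝ) - 2) * rb) = A ∧
    (k1 - k3 * pb) * ((n : ℝ) * rb - pb - 2 * qb)
      + km * qb * (1 - ((n : ℝ) - 1) * pb / (((n : ℝ) - 2) * rb)) - (k2 + km1) * pb = 0 ∧
    k2 * pb + k3 * pb * ((n : ℝ) * rb - pb - 2 * qb) - km * qb = 0 ∧
    k2 * pb - km * qb * (((n : ℝ) * rb - 2 * qb) / (((n : ℝ) - 2) * rb)) = 0 := by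
  have hN : (3:ℝ) ≤ (n:ℝ) := by exact_mod_cast hn
  set N := (n:ℝ) with hNdef
  have hN2 : (0:ℝ) < N - 2 := by linarith
  have hN1 : (0:ℝ) < N - 1 := by linarith
  have h1A : 0 < 1 - A := by linarith
  set s := Real.sqrt ((k1 + km1) ^ 2 + 4 * k1 * k2 * (N - 1)) with hsdef
  have hs0 : 0 ≤ (k1 + km1) ^ 2 + 4 * k1 * k2 * (N - 1) := by
    nlinarith [sq_nonneg (k1 + km1), mul_pos (mul_pos hk1 hk2) hN1]
  have hs2 : s ^ 2 = (k1 + km1) ^ 2 + 4 * k1 * k2 * (N - 1) := Real.sq_sqrt hs0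
  -- basic facts about qh
  have hqh1 : 1 < qh := by rw [hqh]; nlinarith [mul_pos hN2 h1A]
  have hqh2 : qh < N / 2 := by rw [hqh]; nlinarith [mul_pos hN2 hA0]
  have hqh0 : 0 < qh := lt_trans one_pos hqh1
  have hD : 0 < km * qh * (N - 1) + km1 * (N - 2) := by
    have h1 := mul_pos (mul_pos hkm hqh0) hN1
    have h2 := mul_pos hkm1 hN2
    linarith
  -- positivity
  have hpb0 : 0 < pb := by
    rw [hpb]
    exact mul_pos (div_pos (mul_pos (mul_pos hk1 hk2) hN2) (mul_pos hk3 hD))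
      (div_pos h1A hA0)
  have hqb0 : 0 < qb := by
    rw [hqb]
    exact mul_pos (div_pos (mul_pos (mul_pos hk1 (pow_pos hk2 2)) hN2)
      (mul_pos (mul_pos hk3 hkm) hD)) (div_pos h1A (pow_pos hA0 2))
  have hrb0 : 0 < rb := by rw [hrb]; exact div_pos hqb0 hqh0
  -- algebraic relations
  have hA' : A * (N - 2) = N - 2 * qh := by rw [hqh]; ring
  have hrbq : rb * qh = qb := by rw [hrb]; exact div_mul_cancel₀ qb hqh0.ne'
  have hqbp : km * A * qb = k2 * pb := by
    rw [hqb, hpb]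
    field_simp
  have hpbD : pb * (k3 * (km * qh * (N - 1) + km1 * (N - 2))) * A
      = k1 * k2 * (N - 2) * (1 - A) := by
    rw [hpb]
    field_simp
  have hqhs : qh * (2 * km * (N - 1)) = (N - 2) * (s - k1 - km1) := by
    rw [hqh, hA]
    field_simp
    ring
  have key4 : (4 * (N - 1)) * (k1 * (N - 2) * ((N - 2) * k2 - km * qh))
      = (4 * (N - 1)) * (km * qh * (km * qh * (N - 1) + km1 * (N - 2))) := by
    linear_combination (-((N - 2) * s + 2 * km * (N - 1) * qh + (N - 2) * (k1 + km1))) * hqhs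
      + (-(N - 2) ^ 2) * hs2
  have key : k1 * (N - 2) * ((N - 2) * k2 - km * qh)
      = km * qh * (km * qh * (N - 1) + km1 * (N - 2)) :=
    mul_left_cancel₀ (ne_of_gt (by linarith : (0:ℝ) < 4 * (N - 1))) key4
  -- key cleared relation (n r - 2 q) * km qh = (n-2) k2 p
  have S1 : (N * rb - 2 * qb) * (km * qh) = (N - 2) * (k2 * pb) := by
    linear_combination (N - 2) * hqbp + (km * A * (N - 2) + 2 * (km * qh)) * hrbq
      + (-(km * qh * rb)) * hA'
  have h5 : pb * (k3 * A) * ((N - 2) * k2 - km * qh)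
        * (km * qh * (N - 1) + km1 * (N - 2))
      = k2 * (1 - A) * (km * qh) * (km * qh * (N - 1) + km1 * (N - 2)) := by
    linear_combination ((N - 2) * k2 - km * qh) * hpbD + (k2 * (1 - A)) * key
  have h6 : pb * (k3 * A) * ((N - 2) * k2 - km * qh) = k2 * (1 - A) * (km * qh) :=
    mul_right_cancel₀ (ne_of_gt hD) h5
  have hE'' : (N * rb - pb - 2 * qb) * (k3 * A) * (km * qh)
      = k2 * (1 - A) * (km * qh) := by
    linear_combination (k3 * A) * S1 + h6
  have hE' : (N * rb - pb - 2 * qb) * (k3 * A) = k2 * (1 - A) :=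
    mul_right_cancel₀ (ne_of_gt (mul_pos hkm hqh0)) hE''
  -- alpha value
  have hrbne : ((N - 2) * rb) ≠ 0 := ne_of_gt (mul_pos hN2 hrb0)
  have halpha : (N * rb - 2 * qb) / ((N - 2) * rb) = A := by
    rw [div_eq_iff hrbne]
    linear_combination (-rb) * hA' + 2 * hrbq
  refine ⟨⟨hqh1, hqh2⟩, ⟨hpb0, hqb0, hrb0⟩, ⟨?_, ?_⟩, halpha, ?_, ?_, ?_⟩
  · nlinarith [hE', mul_pos hk2 h1A, mul_pos hk3 hA0]
  · rw [hrb]; exact div_le_self hqb0.le hqh1.le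
  · -- first steady-state equation
    have hT : (N - 1) * pb / ((N - 2) * rb) * ((N - 2) * rb) = (N - 1) * pb :=
      div_mul_cancel₀ _ hrbne
    have hmain : ((k1 - k3 * pb) * (N * rb - pb - 2 * qb)
        + km * qb * (1 - (N - 1) * pb / ((N - 2) * rb)) - (k2 + km1) * pb)
        * ((N - 2) * rb * (A * k3)) = 0 := by
      linear_combination ((k1 - k3 * pb) * (N - 2) * rb) * hE' + (k3 * (N - 2) * rb) * hqbp
        + (-(km * qb * A * k3)) * hT + (-rb) * hpbD + (k3 * pb * (N - 1) * km * A) * hrbq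
    have hMne : ((N - 2) * rb * (A * k3)) ≠ 0 :=
      ne_of_gt (mul_pos (mul_pos hN2 hrb0) (mul_pos hA0 hk3))
    exact (mul_eq_zero.mp hmain).resolve_right hMne
  · -- second steady-state equation
    have hmain : (k2 * pb + k3 * pb * (N * rb - pb - 2 * qb) - km * qb) * A = 0 := by
      linear_combination pb * hE' + (-1) * hqbp
    exact (mul_eq_zero.mp hmain).resolve_right hA0.ne'
  · rw [halpha]
    linear_combination (-1) * hqbp
end

section
/- Let n ≥ 3 be an integer and κ1, κ2, κ3, κ₋₁, κ₋ > 0. If (p, q, r) ∈ (0,∞)³ is any steady state of the ODE system (i.e. all three right-hand sides vanish at (p,q,r)), then necessarily 0 < ᾱ < 1 and (p, q, r) = (p̄, q̄, r̄), where q̂ := (n − (n−2) ᾱ)/2, p̄ := (κ1 κ2 (n−2) / (κ3 (κ₋ q̂ (n−1) + κ₋₁ (n−2)))) · (1−ᾱ)/ᾱ, q̄ := (κ1 κ2² (n−2) / (κ3 κ₋ (κ₋ q̂ (n−1) + κ₋₁ (n−2)))) · (1−ᾱ)/ᾱ², and r̄ := q̄ / q̂. In particular the ODE system has at most one steady state with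 all components positive. -/
/-- Uniqueness of the positive steady state: any positive steady state forces `0 < ᾱ < 1`
and equals the explicit one. -/
theorem stmt_6 (n : ℕ) (hn : 3 ≤ n) (k1 k2 k3 km1 km : ℝ)
    (hk1 : 0 < k1) (hk2 : 0 < k2) (hk3 : 0 < k3) (hkm1 : 0 < km1) (hkm : 0 < km)
    (A : ℝ)
    (hA : A = (n : ℝ) / ((n : ℝ) - 2)
      + (km1 + k1 - Real.sqrt ((k1 + km1) ^ 2 + 4 * k1 * k2 * ((n : ℝ) - 1)))
          / (km * ((n : ℝ) - 1)))
    (qh pb qb rb : ℝ)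
    (hqh : qh = ((n : ℝ) - ((n : ℝ) - 2) * A) / 2)
    (hpb : pb = k1 * k2 * ((n : ℝ) - 2) / (k3 * (km * qh * ((n : ℝ) - 1) + km1 * ((n : ℝ) - 2)))
      * ((1 - A) / A))
    (hqb : qb = k1 * k2 ^ 2 * ((n : ℝ) - 2)
        / (k3 * km * (km * qh * ((n : ℝ) - 1) + km1 * ((n : ℝ) - 2)))
      * ((1 - A) / A ^ 2))
    (hrb : rb = qb / qh)
    (p q r : ℝ) (hp : 0 < p) (hq : 0 < q) (hr : 0 < r)
    (hss1 : (k1 - k3 * p) * ((n : ℝ) * r - p - 2 * q)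
      + km * q * (1 - ((n : ℝ) - 1) * p / (((n : ℝ) - 2) * r)) - (k2 + km1) * p = 0)
    (hss2 : k2 * p + k3 * p * ((n : ℝ) * r - p - 2 * q) - km * q = 0)
    (hss3 : k2 * p - km * q * (((n : ℝ) * r - 2 * q) / (((n : ℝ) - 2) * r)) = 0) :
    (0 < A ∧ A < 1) ∧ p = pb ∧ q = qb ∧ r = rb := by
  have hN : (3:ℝ) ≤ (n:ℝ) := by exact_mod_cast hn
  obtain ⟨N, hNdef⟩ : ∃ x : ℝ, x = (n:ℝ) := ⟨_, rfl⟩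
  rw [← hNdef] at hA hqh hpb hqb hss1 hss2 hss3 hN
  have hN2 : 0 < N - 2 := by linarith
  have hN1 : 0 < N - 1 := by linarith
  have hRne : (N - 2) * r ≠ 0 := mul_ne_zero hN2.ne' hr.ne'
  obtain ⟨a, hadef⟩ : ∃ x : ℝ, x = (N * r - 2 * q) / ((N - 2) * r) := ⟨_, rfl⟩
  rw [← hadef] at hss3
  have ha : a * ((N - 2) * r) = N * r - 2 * q := by
    rw [hadef, div_mul_cancel₀ _ hRne]
  have E3 : k2 * p = km * q * a := by linarith [hss3]
  have ha_pos : 0 < a := by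
    nlinarith [mul_pos hkm hq, mul_pos hk2 hp]
  obtain ⟨b, hbdef⟩ : ∃ x : ℝ, x = (N - (N - 2) * a) / 2 := ⟨_, rfl⟩
  have hqbr : q = b * r := by
    have hb2 : b * 2 = N - (N - 2) * a := by rw [hbdef]; ring
    linear_combination (1/2) * ha - (r/2) * hb2
  have hb_pos : 0 < b := by
    rcases lt_or_ge 0 b with h | h
    · exact h
    · nlinarith
  have E2 : k3 * p * (a * ((N - 2) * r) - p) = km * q * (1 - a) := by
    linear_combination hss2 + k3 * p * ha - E3
  obtain ⟨c, hcdef⟩ : ∃ x : ℝ, x = (N - 1) * p / ((N - 2) * r) := ⟨_, rfl⟩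
  rw [← hcdef] at hss1
  have hc : c * ((N - 2) * r) = (N - 1) * p := by
    rw [hcdef, div_mul_cancel₀ _ hRne]
  have E1 : (k1 - k3 * p) * (N * r - p - 2 * q) * ((N - 2) * r)
      + km * q * (((N - 2) * r) - (N - 1) * p) - (k2 + km1) * p * ((N - 2) * r) = 0 := by
    linear_combination ((N - 2) * r) * hss1 + km * q * hc
  obtain ⟨M, hMdef⟩ : ∃ x : ℝ, x = km * b * (N - 1) + km1 * (N - 2) := ⟨_, rfl⟩
  have hM_pos : 0 < M := by
    rw [hMdef]
    have h1 : 0 < km * b * (N - 1) := mul_pos (mul_pos hkm hb_pos) hN1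
    have h2 : 0 < km1 * (N - 2) := mul_pos hkm1 hN2
    linarith
  have E1' : k1 * (a * ((N - 2) * r) - p) * (N - 2)
      = p * M := by
    rw [hMdef]
    have := mul_right_cancel₀ hr.ne' (show
      k1 * (a * ((N - 2) * r) - p) * (N - 2) * r
        = p * (km * b * (N - 1) + km1 * (N - 2)) * r by
      linear_combination E1 + k1 * ((N - 2) * r) * ha + km * (N - 1) * p * hqbr
        + ((N - 2) * r) * E2 - k3 * p * ((N - 2) * r) * ha + ((N - 2) * r) * E3)
    exact this
  have h2'' : k3 * a * (a * ((N - 2) * r) - p) = k2 * (1 - a) := by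
    have := mul_right_cancel₀ hp.ne' (show
      k3 * a * (a * ((N - 2) * r) - p) * p = k2 * (1 - a) * p by
      linear_combination a * E2 - (1 - a) * E3)
    exact this
  have haR : 0 < a * ((N - 2) * r) - p := by
    have he : a * ((N - 2) * r) - p = p * M / (k1 * (N - 2)) := by
      rw [eq_div_iff (mul_pos hk1 hN2).ne']
      linear_combination E1'
    rw [he]; exact div_pos (mul_pos hp hM_pos) (mul_pos hk1 hN2)
  have h1a : (0:ℝ) < 1 - a := by
    have he : 1 - a = k3 * a * (a * ((N - 2) * r) - p) / k2 := by
      rw [eq_div_iff hk2.ne']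
      linear_combination -h2''
    rw [he]; exact div_pos (mul_pos (mul_pos hk3 ha_pos) haR) hk2
  have ha1 : a < 1 := by linarith
  have hp_eq : k3 * a * p * M = k1 * k2 * (N - 2) * (1 - a) := by
    linear_combination k1 * (N - 2) * h2'' - k3 * a * E1'
  have hB : k3 * a * p * ((N - 2) * k2 - km * b) = k2 * (1 - a) * km * b := by
    linear_combination km * b * h2'' + k3 * (N - 2) * a * E3
      + k3 * (N - 2) * a ^ 2 * km * hqbr
  have hQ : (N - 1) * (km * b) ^ 2 + (k1 + km1) * (N - 2) * (km * b)
      = k1 * k2 * (N - 2) ^ 2 := by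
    have hcan : k2 * (1 - a) ≠ 0 := (mul_pos hk2 h1a).ne'
    have hp2 := hp_eq
    rw [hMdef] at hp2
    apply mul_left_cancel₀ hcan
    linear_combination ((N - 2) * k2 - km * b) * hp2
      - (km * b * (N - 1) + km1 * (N - 2)) * hB
  obtain ⟨y, hydef⟩ : ∃ x : ℝ, x = (2 * (N - 1) * (km * b) + (k1 + km1) * (N - 2)) / (N - 2) := ⟨_, rfl⟩
  have hy_nonneg : 0 ≤ y := by
    rw [hydef]
    apply div_nonneg _ hN2.le
    have h1 : 0 < 2 * (N - 1) * (km * b) :=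
      mul_pos (mul_pos two_pos hN1) (mul_pos hkm hb_pos)
    have h2 : 0 < (k1 + km1) * (N - 2) := mul_pos (by linarith) hN2
    linarith
  have hD : (k1 + km1) ^ 2 + 4 * k1 * k2 * (N - 1) = y ^ 2 := by
    rw [hydef]
    rw [div_pow, eq_div_iff (pow_ne_zero 2 hN2.ne')]
    linear_combination -4 * (N - 1) * hQ
  have hsq : Real.sqrt ((k1 + km1) ^ 2 + 4 * k1 * k2 * (N - 1)) = y := by
    rw [hD]; exact Real.sqrt_sq hy_nonneg
  have hAa : A = a := by
    rw [hA, hsq, hydef, hbdef]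
    field_simp
    ring
  have hqhb : qh = b := by rw [hqh, hAa, ← hbdef]
  have hMne : M ≠ 0 := hM_pos.ne'
  refine ⟨⟨by rw [hAa]; exact ha_pos, by rw [hAa]; exact ha1⟩, ?_, ?_, ?_⟩
  · rw [hpb, hqhb, hAa, ← hMdef]
    rw [div_mul_div_comm, eq_div_iff (mul_ne_zero (mul_pos hk3 hM_pos).ne' ha_pos.ne')]
    linear_combination hp_eq
  · rw [hqb, hqhb, hAa, ← hMdef]
    rw [div_mul_div_comm, eq_div_iff (mul_ne_zero (mul_pos (mul_pos hk3 hkm) hM_pos).ne'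
      (pow_ne_zero 2 ha_pos.ne'))]
    linear_combination k2 * hp_eq - k3 * a * M * E3
  · rw [hrb, hqb, hqhb, hAa, ← hMdef]
    rw [div_mul_div_comm, div_div, eq_div_iff (mul_ne_zero (mul_ne_zero
      (mul_pos (mul_pos hk3 hkm) hM_pos).ne' (pow_ne_zero 2 ha_pos.ne')) hb_pos.ne')]
    linear_combination k2 * hp_eq - k3 * a * M * E3 - k3 * km * M * a ^ 2 * hqbr
end

section
/- Let n ≥ 3 be an integer and κ1, κ2, κ₋₁, κ₋ > 0, and set q̂ := (n−2)(−κ₋₁ − κ1 + √((κ1 + κ₋₁)² + 4 κ1 κ2 (n−1))) / (2 κ₋ (n−1)). Then the following are equivalent: (i) ᾱ < 1; (ii) q̂ > 1; (iii) κ1 κ2 > (κ₋/(n−2)) (κ1 + ((n−1)/(n−2)) κ₋ + κ₋₁). -/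
/-- Equivalent characterizations of `ᾱ < 1`. -/
theorem stmt_8 (n : ℕ) (hn : 3 ≤ n) (k1 k2 km1 km : ℝ)
    (hk1 : 0 < k1) (hk2 : 0 < k2) (hkm1 : 0 < km1) (hkm : 0 < km)
    (A : ℝ)
    (hA : A = (n : ℝ) / ((n : ℝ) - 2)
      + (km1 + k1 - Real.sqrt ((k1 + km1) ^ 2 + 4 * k1 * k2 * ((n : ℝ) - 1)))
          / (km * ((n : ℝ) - 1)))
    (qh : ℝ)
    (hqh : qh = ((n : ℝ) - 2) * (-km1 - k1
        + Real.sqrt ((k1 + km1) ^ 2 + 4 * k1 * k2 * ((n : ℝ) - 1)))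
      / (2 * km * ((n : ℝ) - 1))) :
    (A < 1 ↔ 1 < qh) ∧
    (1 < qh ↔
      k1 * k2 > km / ((n : ℝ) - 2)
        * (k1 + ((n : ℝ) - 1) / ((n : ℝ) - 2) * km + km1)) := by
  have hn3 : (3 : ℝ) ≤ (n : ℝ) := by exact_mod_cast hn
  set c : ℝ := (n : ℝ) with hc
  have hm : 0 < c - 2 := by linarith
  have h1 : 0 < c - 1 := by linarith
  set S : ℝ := Real.sqrt ((k1 + km1) ^ 2 + 4 * k1 * k2 * (c - 1)) with hS
  have hSnn : 0 ≤ S := Real.sqrt_nonneg _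
  have hSsq : S ^ 2 = (k1 + km1) ^ 2 + 4 * k1 * k2 * (c - 1) := by
    rw [hS, Real.sq_sqrt]; positivity
  set L : ℝ := (c - 2) * (k1 + km1) + 2 * km * (c - 1) with hL
  have hLpos : 0 < L := by positivity
  have hd1 : 0 < (c - 2) * (km * (c - 1)) := by positivity
  have hd2 : 0 < 2 * km * (c - 1) := by positivity
  -- intermediate condition P0 : L < (c-2)*S
  have e1 : A - 1 = (L - (c - 2) * S) / ((c - 2) * (km * (c - 1))) := by
    rw [hA, hL]; field_simp; ring
  have e2 : qh - 1 = ((c - 2) * S - L) / (2 * km * (c - 1)) := by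
    rw [hqh, hL]; field_simp; ring
  have hiff1 : A < 1 ↔ L < (c - 2) * S := by
    rw [← sub_neg, e1, div_neg_iff]
    constructor
    · rintro (⟨_, h⟩ | ⟨h, _⟩)
      · linarith
      · linarith
    · intro h; right; exact ⟨by linarith, hd1⟩
  have hiff2 : 1 < qh ↔ L < (c - 2) * S := by
    rw [← sub_pos, e2, div_pos_iff]
    constructor
    · rintro (⟨h, _⟩ | ⟨_, h⟩)
      · linarith
      · linarith
    · intro h; left; exact ⟨by linarith, hd2⟩
  -- squaring
  have hiff3 : L < (c - 2) * S ↔ L ^ 2 < ((c - 2) * S) ^ 2 := by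
    constructor
    · intro h; exact pow_lt_pow_left₀ h (le_of_lt hLpos) (by norm_num)
    · intro h
      by_contra hcon
      push_neg at hcon
      exact absurd (pow_le_pow_left₀ (by positivity) hcon 2) (not_le.mpr h)
  -- final algebra
  set X : ℝ := k1 * k2 * (c - 2) ^ 2 - (km * (k1 + km1) * (c - 2) + km ^ 2 * (c - 1))
    with hX
  have key : ((c - 2) * S) ^ 2 - L ^ 2 = 4 * (c - 1) * X := by
    rw [mul_pow, hSsq, hL, hX]; ring
  have e3 : km / (c - 2) * (k1 + (c - 1) / (c - 2) * km + km1)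
      = (km * (k1 + km1) * (c - 2) + km ^ 2 * (c - 1)) / (c - 2) ^ 2 := by
    field_simp; ring
  have hiff4 : L ^ 2 < ((c - 2) * S) ^ 2 ↔
      k1 * k2 > km / (c - 2) * (k1 + (c - 1) / (c - 2) * km + km1) := by
    rw [e3, gt_iff_lt, div_lt_iff₀ (by positivity : (0:ℝ) < (c - 2) ^ 2)]
    have h4 : (0:ℝ) < 4 * (c - 1) := by linarith
    constructor
    · intro h
      have hXpos : 0 < 4 * (c - 1) * X := by linarith
      have := mul_pos_iff.mp hXpos
      rcases this with ⟨_, hx⟩ | ⟨h4', _⟩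
      · rw [hX] at hx; linarith
      · linarith
    · intro h
      have hXpos : 0 < X := by rw [hX]; linarith
      nlinarith [mul_pos h4 hXpos]
  exact ⟨hiff1.trans hiff2.symm, hiff2.trans (hiff3.trans hiff4)⟩
end

section
/- Let n ≥ 3 be an integer, κ1, κ2, κ₋₁, κ₋ > 0, and suppose 0 < ᾱ < 1. Set q̂ := (n − (n−2) ᾱ)/2 and p̂ := κ₋ q̂ ᾱ / κ2. Then the quantity ŝ := n − p̂ − 2 q̂ satisfies ŝ = (κ₋ q̂ (κ₋₁ (n−2) + κ₋ q̂ (n−1)) / ((n−2) κ1 κ2)) · ᾱ, and in particular ŝ > 0. -/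
/-!
Writing `S` for the square root in `ᾱ`, the definition of `q̂` becomes
`2 κ₋ (n-1) q̂ = (n-2) (S - κ1 - κ₋₁)`, so `q̂` is the positive root of
`κ₋² (n-1) q² + κ₋ (κ1 + κ₋₁) (n-2) q = κ1 κ2 (n-2)²`.
Since `n - 2 q̂ = (n-2) ᾱ`, we get `ŝ = ᾱ ((n-2) - κ₋ q̂ / κ2)`, and the quadratic turns this
into the stated formula, every factor of which is positive (`q̂ > 1` because `ᾱ < 1`).
-/

theorem quadratic_of_two_mul_eq_mul_sub {N k1 k2 km1 km S q : ℝ} (hN : N - 1 ≠ 0)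
    (hS : S ^ 2 = (k1 + km1) ^ 2 + 4 * k1 * k2 * (N - 1))
    (hq : 2 * km * (N - 1) * q = (N - 2) * (S - k1 - km1)) :
    km ^ 2 * (N - 1) * q ^ 2 + km * (k1 + km1) * (N - 2) * q = k1 * k2 * (N - 2) ^ 2 := by
  have hN1 : (4 : ℝ) * (N - 1) ≠ 0 := mul_ne_zero four_ne_zero hN
  apply mul_left_cancel₀ hN1
  linear_combination (2 * km * (N - 1) * q + (N - 2) * (S + k1 + km1)) * hq + (N - 2) ^ 2 * hS

theorem sub_eq_mul_of_quadratic {N k1 k2 km1 km A q p s : ℝ} (hN : N - 2 ≠ 0) (hk1 : k1 ≠ 0)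
    (hk2 : k2 ≠ 0)
    (hquad : km ^ 2 * (N - 1) * q ^ 2 + km * (k1 + km1) * (N - 2) * q = k1 * k2 * (N - 2) ^ 2)
    (hq : q = (N - (N - 2) * A) / 2) (hp : p = km * q * A / k2) (hs : s = N - p - 2 * q) :
    s = km * q * (km1 * (N - 2) + km * q * (N - 1)) / ((N - 2) * k1 * k2) * A := by
  rw [hs, hp]
  field_simp
  linear_combination (-A) * hquad - 2 * (N - 2) * k1 * k2 * hq

/-- Formula and positivity for `ŝ = n - p̂ - 2 q̂` at the steady state. -/
theorem stmt_10 (n : ℕ) (hn : 3 ≤ n) (k1 k2 km1 km : ℝ)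
    (hk1 : 0 < k1) (hk2 : 0 < k2) (hkm1 : 0 < km1) (hkm : 0 < km)
    (A : ℝ)
    (hA : A = (n : ℝ) / ((n : ℝ) - 2)
      + (km1 + k1 - Real.sqrt ((k1 + km1) ^ 2 + 4 * k1 * k2 * ((n : ℝ) - 1)))
          / (km * ((n : ℝ) - 1)))
    (hA0 : 0 < A) (hA1 : A < 1)
    (qh ph sh : ℝ)
    (hqh : qh = ((n : ℝ) - ((n : ℝ) - 2) * A) / 2)
    (hph : ph = km * qh * A / k2)
    (hsh : sh = (n : ℝ) - ph - 2 * qh) :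
    sh = km * qh * (km1 * ((n : ℝ) - 2) + km * qh * ((n : ℝ) - 1))
        / (((n : ℝ) - 2) * k1 * k2) * A ∧
    0 < sh := by
  have hn3 : (3 : ℝ) ≤ n := by exact_mod_cast hn
  have hn2 : (0 : ℝ) < n - 2 := by linarith
  have hn1 : (0 : ℝ) < n - 1 := by linarith
  set S := Real.sqrt ((k1 + km1) ^ 2 + 4 * k1 * k2 * ((n : ℝ) - 1))
  have hS : S ^ 2 = (k1 + km1) ^ 2 + 4 * k1 * k2 * ((n : ℝ) - 1) := Real.sq_sqrt (by positivity)
  have hq_root : 2 * km * ((n : ℝ) - 1) * qh = ((n : ℝ) - 2) * (S - k1 - km1) := by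
    rw [hqh, hA]
    field_simp
    ring
  have hsh_eq := sub_eq_mul_of_quadratic hn2.ne' hk1.ne' hk2.ne'
    (quadratic_of_two_mul_eq_mul_sub hn1.ne' hS hq_root) hqh hph hsh
  have hqh_pos : 0 < qh := by nlinarith
  refine ⟨hsh_eq, ?_⟩
  rw [hsh_eq]
  positivity
end

section
/- Let n ≥ 3 be an integer and κ1, κ2, κ3, κ₋₁ > 0. Consider the planar ODE system p' = κ1 s − (κ2 + κ₋₁ + κ3 s) p, s' = ((n−1) κ2 + κ₋₁) p − (κ1 + κ3 p) s. Then (p∞, s∞) with s∞ := (n−2) κ2 / (2 κ3) and p∞ := κ1 s∞ / (κ2 + κ₋₁ + κ3 s∞) = (n−2) κ1 κ2 / (κ3 (n κ2 + 2 κ₋₁)) is the unique point in (0,∞)² at which both right-hand sides vanish; moreover p∞ < κ1/κ3. -/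
/-- The planar system (case `κ₋ = 0`) has the explicit unique positive steady state. -/
theorem stmt_13 (n : ℕ) (hn : 3 ≤ n) (k1 k2 k3 km1 : ℝ)
    (hk1 : 0 < k1) (hk2 : 0 < k2) (hk3 : 0 < k3) (hkm1 : 0 < km1)
    (pinf sinf : ℝ)
    (hsinf : sinf = ((n : ℝ) - 2) * k2 / (2 * k3))
    (hpinf : pinf = k1 * sinf / (k2 + km1 + k3 * sinf)) :
    (0 < pinf ∧ 0 < sinf) ∧
    pinf = ((n : ℝ) - 2) * k1 * k2 / (k3 * ((n : ℝ) * k2 + 2 * km1)) ∧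
    (k1 * sinf - (k2 + km1 + k3 * sinf) * pinf = 0 ∧
      (((n : ℝ) - 1) * k2 + km1) * pinf - (k1 + k3 * pinf) * sinf = 0) ∧
    (∀ p s : ℝ, 0 < p → 0 < s →
      k1 * s - (k2 + km1 + k3 * s) * p = 0 →
      (((n : ℝ) - 1) * k2 + km1) * p - (k1 + k3 * p) * s = 0 →
      p = pinf ∧ s = sinf) ∧
    pinf < k1 / k3 := by
  have hn' : (3 : ℝ) ≤ (n : ℝ) := by exact_mod_cast hn
  have hn2 : (0 : ℝ) < (n : ℝ) - 2 := by linarith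
  have hs : 0 < sinf := by rw [hsinf]; positivity
  have hD : 0 < k2 + km1 + k3 * sinf := by positivity
  have hp : 0 < pinf := by rw [hpinf]; positivity
  have hkey : 2 * k3 * sinf = ((n : ℝ) - 2) * k2 := by
    rw [hsinf]; field_simp
  have hpD : pinf * (k2 + km1 + k3 * sinf) = k1 * sinf := by
    rw [hpinf]; field_simp
  refine ⟨⟨hp, hs⟩, ?_, ⟨?_, ?_⟩, ?_, ?_⟩
  · rw [hpinf, div_eq_div_iff hD.ne' (by positivity)]
    linear_combination (k1 * (k2 + km1)) * hkey
  · linear_combination -hpD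
  · linear_combination hpD - pinf * hkey
  · intro p s hp0 hs0 h1 h2
    have hsum : p * (((n : ℝ) - 2) * k2 - 2 * k3 * s) = 0 := by
      linear_combination h1 + h2
    have hs' : s = sinf := by
      rcases mul_eq_zero.mp hsum with h | h
      · exact absurd h (ne_of_gt hp0)
      · have h2k3 : (2 * k3) ≠ 0 := by positivity
        apply mul_left_cancel₀ h2k3
        linear_combination -h - hkey
    subst hs'
    refine ⟨?_, rfl⟩
    apply mul_right_cancel₀ hD.ne'
    linear_combination -h1 - hpD
  · rw [lt_div_iff₀ hk3]
    nlinarith [hpD, hD, mul_pos hk1 (add_pos hk2 hkm1)]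
end

section
/- Let n ≥ 3 be an integer, κ1, κ2, κ3, κ₋₁ > 0, let (p∞, s∞) be the unique positive steady state of the planar system (s∞ = (n−2) κ2 / (2 κ3), p∞ = κ1 s∞ / (κ2 + κ₋₁ + κ3 s∞)), and for a ≥ 1 let R_a := [p∞/a, a p∞] × [s∞/a, a s∞]. Then for every a > 1 the vector field of the planar system points strictly into R_a at every boundary point of R_a; in particular, for p = p∞/a and s ∈ [s∞/a, a s∞], one has κ1 s − (κ2 + κ₋₁ + κ3 s) p ≥ κ3 p∞ s∞ (a−1)/a² > 0, and analogously p' < 0 on the right edge {a p∞} × [s∞/a, a s∞], s' > 0 on the bottom edge [p∞/a, a p∞] × {s∞/a}, and s' < 0 on the top edge [p∞/a, a p∞] × {a s∞}. -/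
private lemma edge1_aux (k1 k2 k3 km1 pinf sinf a s : ℝ)
    (hk1 : 0 < k1) (hk2 : 0 < k2) (hk3 : 0 < k3) (hkm1 : 0 < km1)
    (hs0 : 0 < sinf) (hp0 : 0 < pinf)
    (hEq : k1 * sinf = (k2 + km1 + k3 * sinf) * pinf)
    (ha : 1 < a) (ha0 : 0 < a) (hu : 0 ≤ a * s - sinf) :
    k1 * s - (k2 + km1 + k3 * s) * (pinf / a)
        ≥ k3 * pinf * sinf * (a - 1) / a ^ 2 := by
  have hkp : k3 * pinf < k1 := by nlinarith [mul_pos hk2 hp0, mul_pos hkm1 hp0]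
  have hEqa : k1 * sinf * a = (k2 + km1 + k3 * sinf) * pinf * a := by rw [hEq]
  rw [ge_iff_le, div_le_iff₀ (by positivity : (0:ℝ) < a ^ 2)]
  have hfrac : (k1 * s - (k2 + km1 + k3 * s) * (pinf / a)) * a ^ 2
      = k1 * s * a ^ 2 - (k2 + km1 + k3 * s) * (pinf * a) := by
    field_simp
  rw [hfrac]
  nlinarith [mul_nonneg hu (by nlinarith [mul_nonneg (by linarith : (0:ℝ) ≤ a - 1) hk1.le] : (0:ℝ) ≤ k1 * a - k3 * pinf), hEqa]

private lemma edge2_aux (k1 k2 k3 km1 pinf sinf a s : ℝ)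
    (hk2 : 0 < k2) (hk3 : 0 < k3) (hkm1 : 0 < km1)
    (hs0 : 0 < sinf) (hp0 : 0 < pinf)
    (hEq : k1 * sinf = (k2 + km1 + k3 * sinf) * pinf)
    (ha : 1 < a) (ha0 : 0 < a)
    (hu : 0 ≤ a * s - sinf) (hv : 0 ≤ a * sinf - s) :
    k1 * s - (k2 + km1 + k3 * s) * (a * pinf) < 0 := by
  have hA : 0 < a ^ 2 - 1 := by nlinarith
  have hEqa : k1 * sinf * a = (k2 + km1 + k3 * sinf) * pinf * a := by rw [hEq]
  rcases le_or_gt k1 (a * k3 * pinf) with ht | ht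
  · have h1 : 0 ≤ (a * k3 * pinf - k1) * (a * s - sinf) :=
      mul_nonneg (by linarith) hu
    have h2 : a * (k1 * s - (k2 + km1 + k3 * s) * (a * pinf)) < 0 := by
      nlinarith [mul_pos hA (mul_pos hk2 hp0), mul_pos hA (mul_pos hkm1 hp0),
        mul_pos (by linarith : (0:ℝ) < a - 1) (mul_pos (mul_pos hk3 hs0) hp0)]
    nlinarith [h2]
  · have h1 : 0 ≤ (k1 - a * k3 * pinf) * (a * sinf - s) :=
      mul_nonneg (by linarith) hv
    nlinarith [mul_pos (mul_pos (by linarith : (0:ℝ) < a - 1) ha0)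
        (mul_pos (mul_pos hk3 hs0) hp0)]

private lemma edge3_aux (N k1 k3 pinf sinf a p : ℝ)
    (hk3 : 0 < k3) (hs0 : 0 < sinf) (hp0 : 0 < pinf)
    (hEq2 : N * pinf = (k1 + k3 * pinf) * sinf)
    (hNa : 0 ≤ a * N - k3 * sinf)
    (ha : 1 < a) (ha0 : 0 < a) (hu : 0 ≤ a * p - pinf) :
    0 < N * p - (k1 + k3 * p) * (sinf / a) := by
  have hgoal : N * p - (k1 + k3 * p) * (sinf / a)
      = (a * (N * p) - (k1 + k3 * p) * sinf) / a := by field_simp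
  rw [hgoal]
  apply div_pos _ ha0
  have hEq2a : N * pinf * a = (k1 + k3 * pinf) * sinf * a := by rw [hEq2]
  have h2 : 0 < a * (a * (N * p) - (k1 + k3 * p) * sinf) := by
    nlinarith [mul_nonneg hNa hu,
      mul_pos (by linarith : (0:ℝ) < a - 1) (mul_pos (mul_pos hk3 hs0) hp0)]
  nlinarith [h2]

private lemma edge4_aux (N k1 k3 pinf sinf a p : ℝ)
    (hk1 : 0 < k1) (hk3 : 0 < k3)
    (hs0 : 0 < sinf) (hp0 : 0 < pinf)
    (hEq2 : N * pinf = (k1 + k3 * pinf) * sinf)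
    (ha : 1 < a) (ha0 : 0 < a)
    (hu : 0 ≤ a * p - pinf) (hv : 0 ≤ a * pinf - p) :
    N * p - (k1 + k3 * p) * (a * sinf) < 0 := by
  have hEq2a : N * pinf * a = (k1 + k3 * pinf) * sinf * a := by rw [hEq2]
  have hA : 0 < a ^ 2 - 1 := by nlinarith
  rcases le_or_gt (a * k3 * sinf) N with ht | ht
  · have h1 : 0 ≤ (N - a * k3 * sinf) * (a * pinf - p) :=
      mul_nonneg (by linarith) hv
    nlinarith [mul_pos (mul_pos (by linarith : (0:ℝ) < a - 1) ha0)
        (mul_pos (mul_pos hk3 hp0) hs0)]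
  · have h1 : 0 ≤ (a * k3 * sinf - N) * (a * p - pinf) :=
      mul_nonneg (by linarith) hu
    have h2 : a * (N * p - (k1 + k3 * p) * (a * sinf)) < 0 := by
      nlinarith [mul_pos hA (mul_pos hk1 hs0),
        mul_pos (by linarith : (0:ℝ) < a - 1) (mul_pos (mul_pos hk3 hs0) hp0)]
    nlinarith [h2]

/-- The vector field of the planar system points strictly into the rectangle
`R_a = [p∞/a, a p∞] × [s∞/a, a s∞]` on each of its four edges, for every `a > 1`. -/
theorem stmt_14 (n : ℕ) (hn : 3 ≤ n) (k1 k2 k3 km1 : ℝ)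
    (hk1 : 0 < k1) (hk2 : 0 < k2) (hk3 : 0 < k3) (hkm1 : 0 < km1)
    (pinf sinf : ℝ)
    (hsinf : sinf = ((n : ℝ) - 2) * k2 / (2 * k3))
    (hpinf : pinf = k1 * sinf / (k2 + km1 + k3 * sinf))
    (a : ℝ) (ha : 1 < a) :
    (∀ s : ℝ, s ∈ Set.Icc (sinf / a) (a * sinf) →
      k1 * s - (k2 + km1 + k3 * s) * (pinf / a)
        ≥ k3 * pinf * sinf * (a - 1) / a ^ 2 ∧
      0 < k3 * pinf * sinf * (a - 1) / a ^ 2) ∧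
    (∀ s : ℝ, s ∈ Set.Icc (sinf / a) (a * sinf) →
      k1 * s - (k2 + km1 + k3 * s) * (a * pinf) < 0) ∧
    (∀ p : ℝ, p ∈ Set.Icc (pinf / a) (a * pinf) →
      0 < (((n : ℝ) - 1) * k2 + km1) * p - (k1 + k3 * p) * (sinf / a)) ∧
    (∀ p : ℝ, p ∈ Set.Icc (pinf / a) (a * pinf) →
      (((n : ℝ) - 1) * k2 + km1) * p - (k1 + k3 * p) * (a * sinf) < 0) := by
  have hn' : (3 : ℝ) ≤ (n : ℝ) := by exact_mod_cast hn
  have ha0 : (0 : ℝ) < a := lt_trans one_pos ha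
  have ha1 : (0 : ℝ) < a - 1 := by linarith
  have hs0 : 0 < sinf := by
    rw [hsinf]
    exact div_pos (by nlinarith) (by positivity)
  have hden : 0 < k2 + km1 + k3 * sinf := by positivity
  have hp0 : 0 < pinf := by
    rw [hpinf]; positivity
  have hEq : k1 * sinf = (k2 + km1 + k3 * sinf) * pinf := by
    rw [hpinf]; field_simp
  have hS : 2 * k3 * sinf = ((n : ℝ) - 2) * k2 := by
    rw [hsinf]; field_simp
  have hEq2 : (((n : ℝ) - 1) * k2 + km1) * pinf = (k1 + k3 * pinf) * sinf := by
    linear_combination -hEq - pinf * hS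
  have hN0 : 0 < ((n : ℝ) - 1) * k2 + km1 := by nlinarith
  have hNa : 0 ≤ a * (((n : ℝ) - 1) * k2 + km1) - k3 * sinf := by
    nlinarith [mul_nonneg ha1.le hN0.le, hS, hk2.le, hkm1.le]
  refine ⟨?_, ?_, ?_, ?_⟩
  · rintro s ⟨hlo, hhi⟩
    have hu : 0 ≤ a * s - sinf := by
      have := (div_le_iff₀ ha0).1 hlo; linarith
    exact ⟨edge1_aux k1 k2 k3 km1 pinf sinf a s hk1 hk2 hk3 hkm1 hs0 hp0 hEq ha ha0 hu,
      by positivity⟩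
  · rintro s ⟨hlo, hhi⟩
    have hu : 0 ≤ a * s - sinf := by
      have := (div_le_iff₀ ha0).1 hlo; linarith
    exact edge2_aux k1 k2 k3 km1 pinf sinf a s hk2 hk3 hkm1 hs0 hp0 hEq ha ha0 hu
      (by linarith)
  · rintro p ⟨hlo, hhi⟩
    have hu : 0 ≤ a * p - pinf := by
      have := (div_le_iff₀ ha0).1 hlo; linarith
    exact edge3_aux _ k1 k3 pinf sinf a p hk3 hs0 hp0 hEq2 hNa ha ha0 hu
  · rintro p ⟨hlo, hhi⟩
    have hu : 0 ≤ a * p - pinf := by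
      have := (div_le_iff₀ ha0).1 hlo; linarith
    exact edge4_aux _ k1 k3 pinf sinf a p hk1 hk3 hs0 hp0 hEq2 ha ha0 hu
      (by linarith)
end

section
/- Let n ≥ 3 be an integer, κ1, κ2, κ3, κ₋₁ > 0 and κ₋ = 0, and let (p, q, r) be the global solution of the ODE system with admissible initial data (p0, q0, r0) ∈ (0,∞)³. Then p(t) → p∞ and s(t) := n r(t) − p(t) − 2 q(t) → s∞ as t → ∞, where s∞ := (n−2) κ2 / (2 κ3) and p∞ := κ1 s∞ / (κ2 + κ₋₁ + κ3 s∞). -/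
/-!
With `s = n r - p - 2 q`, the pair `(p, s)` solves the closed planar system
`p' = κ₁ s - κ₃ p s - a p`, `s' = b p - κ₁ s - κ₃ p s` with `a = κ₂ + κ₋₁ < b = (n - 1) κ₂ + κ₋₁`.
The system is cooperative, so the positive quadrant is invariant, and it drives `p` below
`κ₁ / κ₃` and then `s` below `b / κ₃`. From then on `(p', s')` solves a cooperative linear system
too, so `p'` and `s'` eventually keep their signs: `p` and `s` are eventually monotone and bounded,
hence converge to an equilibrium. The origin is a saddle which a solution with `p > 0` cannot
approach, and the only other equilibrium is `(p∞, s∞)`.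
-/

open Set Filter Topology

lemma HasDerivAt.eventually_nhdsGT_nonneg {F : ℝ → ℝ} {F' x : ℝ} (hF : HasDerivAt F F' x)
    (hx : 0 ≤ F x) (hF' : F x = 0 → 0 < F') : ∀ᶠ y in 𝓝[>] x, 0 ≤ F y := by
  rcases hx.lt_or_eq with hx | hx
  · exact ((hF.continuousAt.eventually (lt_mem_nhds hx)).filter_mono nhdsWithin_le_nhds).mono
      fun _ h => h.le
  · have hslope : ∀ᶠ y in 𝓝[>] x, 0 < slope F x y :=
      (hasDerivAt_iff_tendsto_slope_left_right.1 hF).2.eventually (lt_mem_nhds (hF' hx.symm))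
    filter_upwards [hslope, self_mem_nhdsWithin] with y hy hxy
    rw [slope_def_field, ← hx, sub_zero] at hy
    exact ((div_pos_iff_of_pos_right (sub_pos.2 hxy)).1 hy).le

/-- At a point where `f + φ` vanishes while `g + φ ≥ 0`, the exponential growth rate `K` of `φ`
beats `A + B`, so `f + φ` is strictly increasing there. -/
lemma eventually_nhdsGT_add_nonneg {f g A B φ : ℝ → ℝ} {K x : ℝ}
    (hf : HasDerivAt f (A x * f x + B x * g x) x) (hφ : HasDerivAt φ (K * φ x) x)
    (hφ₀ : 0 < φ x) (hB : 0 ≤ B x) (hK : A x + B x < K)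
    (hfx : 0 ≤ f x + φ x) (hgx : 0 ≤ g x + φ x) : ∀ᶠ y in 𝓝[>] x, 0 ≤ f y + φ y := by
  refine (hf.add hφ).eventually_nhdsGT_nonneg hfx fun hx => ?_
  rw [Pi.add_apply, add_eq_zero_iff_eq_neg] at hx
  have hBg : B x * -φ x ≤ B x * g x := mul_le_mul_of_nonneg_left (by linarith) hB
  rw [hx]
  nlinarith [mul_pos (sub_pos.2 hK) hφ₀]

/-- Real induction on `[t₀, t₁]`: after adding `ε e^{K (t - t₁)}`, each component is strictly
increasing wherever it vanishes, so the pair cannot leave the closed positive quadrant. -/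
lemma cooperative_add_exp_nonneg {f g A B C D : ℝ → ℝ} {t₀ t₁ K ε : ℝ} (ht : t₀ ≤ t₁)
    (hε : 0 < ε)
    (hf : ∀ t ∈ Icc t₀ t₁, HasDerivAt f (A t * f t + B t * g t) t)
    (hg : ∀ t ∈ Icc t₀ t₁, HasDerivAt g (C t * f t + D t * g t) t)
    (hB₀ : ∀ t ∈ Icc t₀ t₁, 0 ≤ B t) (hC₀ : ∀ t ∈ Icc t₀ t₁, 0 ≤ C t)
    (hK : ∀ t ∈ Icc t₀ t₁, A t + B t < K ∧ D t + C t < K)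
    (hf₀ : 0 ≤ f t₀) (hg₀ : 0 ≤ g t₀) :
    0 ≤ f t₁ + ε ∧ 0 ≤ g t₁ + ε := by
  set φ : ℝ → ℝ := fun t => ε * Real.exp (K * (t - t₁))
  have hφ : ∀ t, HasDerivAt φ (K * φ t) t := fun t => by
    have := (((hasDerivAt_id' t).sub_const t₁).const_mul K).exp.const_mul ε
    exact this.congr_deriv (by simp only [φ]; ring)
  have hφ₀ : ∀ t, 0 < φ t := fun t => by positivity
  let S : Set ℝ := {t | 0 ≤ f t + φ t ∧ 0 ≤ g t + φ t}
  have hS : Icc t₀ t₁ ⊆ S := by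
    refine IsClosed.Icc_subset_of_forall_mem_nhdsWithin ?_
      ⟨by linarith [hφ₀ t₀], by linarith [hφ₀ t₀]⟩ ?_
    · have hcont : ContinuousOn (fun t => (f t + φ t, g t + φ t)) (Icc t₀ t₁) := fun t ht =>
        (((hf t ht).continuousAt.add (hφ t).continuousAt).prodMk
          ((hg t ht).continuousAt.add (hφ t).continuousAt)).continuousWithinAt
      rw [inter_comm]
      exact hcont.preimage_isClosed_of_isClosed isClosed_Icc (isClosed_Ici.prod isClosed_Ici)
    · rintro x ⟨⟨hfx, hgx⟩, hx⟩
      have hx' := Ico_subset_Icc_self hx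
      have hg' := (hg x hx').congr_deriv (add_comm _ _)
      exact (eventually_nhdsGT_add_nonneg (hf x hx') (hφ x) (hφ₀ x) (hB₀ x hx') (hK x hx').1
        hfx hgx).and
        (eventually_nhdsGT_add_nonneg hg' (hφ x) (hφ₀ x) (hC₀ x hx') (hK x hx').2 hgx hfx)
  simpa [S, φ] using hS ⟨ht, le_rfl⟩

lemma exists_forall_add_lt_of_continuousOn {A B : ℝ → ℝ} {t₀ t₁ : ℝ}
    (hA : ContinuousOn A (Icc t₀ t₁)) (hB : ContinuousOn B (Icc t₀ t₁)) :
    ∃ K, ∀ t ∈ Icc t₀ t₁, A t + B t < K := by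
  obtain ⟨M, hM⟩ := isCompact_Icc.bddAbove_image (hA.add hB)
  exact ⟨M + 1, fun t ht => (hM (mem_image_of_mem _ ht)).trans_lt (lt_add_one M)⟩

theorem cooperative_nonneg {f g A B C D : ℝ → ℝ} {t₀ : ℝ}
    (hf : ∀ t ≥ t₀, HasDerivAt f (A t * f t + B t * g t) t)
    (hg : ∀ t ≥ t₀, HasDerivAt g (C t * f t + D t * g t) t)
    (hA : ContinuousOn A (Ici t₀)) (hB : ContinuousOn B (Ici t₀))
    (hC : ContinuousOn C (Ici t₀)) (hD : ContinuousOn D (Ici t₀))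
    (hB₀ : ∀ t ≥ t₀, 0 ≤ B t) (hC₀ : ∀ t ≥ t₀, 0 ≤ C t)
    (hf₀ : 0 ≤ f t₀) (hg₀ : 0 ≤ g t₀) :
    ∀ t ≥ t₀, 0 ≤ f t ∧ 0 ≤ g t := by
  intro t₁ ht₁
  have hsub : Icc t₀ t₁ ⊆ Ici t₀ := Icc_subset_Ici_self
  obtain ⟨K₁, hK₁⟩ := exists_forall_add_lt_of_continuousOn (hA.mono hsub) (hB.mono hsub)
  obtain ⟨K₂, hK₂⟩ := exists_forall_add_lt_of_continuousOn (hD.mono hsub) (hC.mono hsub)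
  have hε : ∀ ε > 0, 0 ≤ f t₁ + ε ∧ 0 ≤ g t₁ + ε := fun ε hε =>
    cooperative_add_exp_nonneg (K := max K₁ K₂) ht₁ hε (fun t ht => hf t ht.1)
      (fun t ht => hg t ht.1) (fun t ht => hB₀ t ht.1) (fun t ht => hC₀ t ht.1)
      (fun t ht => ⟨(hK₁ t ht).trans_le (le_max_left _ _), (hK₂ t ht).trans_le (le_max_right _ _)⟩)
      hf₀ hg₀
  exact ⟨le_of_forall_pos_le_add fun ε h => (hε ε h).1,
    le_of_forall_pos_le_add fun ε h => (hε ε h).2⟩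

lemma IsPreconnected.nonneg_of_ne_zero {f : ℝ → ℝ} {s : Set ℝ} (hs : IsPreconnected s)
    (hf : ContinuousOn f s) (hf₀ : ∀ t ∈ s, f t ≠ 0) {a : ℝ} (ha : a ∈ s) (hfa : 0 ≤ f a) :
    ∀ t ∈ s, 0 ≤ f t := by
  intro t ht
  by_contra! hft
  obtain ⟨x, hx, hfx⟩ := hs.intermediate_value ht ha hf ⟨hft.le, hfa⟩
  exact hf₀ x hx hfx

/-- Either the solution enters the closed positive or negative quadrant, which is then
invariant, or it stays in the open mixed quadrants, where `f` never vanishes and so keeps its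
sign. -/
theorem cooperative_eventually_sign {f g A B C D : ℝ → ℝ} {t₀ : ℝ}
    (hf : ∀ t ≥ t₀, HasDerivAt f (A t * f t + B t * g t) t)
    (hg : ∀ t ≥ t₀, HasDerivAt g (C t * f t + D t * g t) t)
    (hA : ContinuousOn A (Ici t₀)) (hB : ContinuousOn B (Ici t₀))
    (hC : ContinuousOn C (Ici t₀)) (hD : ContinuousOn D (Ici t₀))
    (hB₀ : ∀ t ≥ t₀, 0 ≤ B t) (hC₀ : ∀ t ≥ t₀, 0 ≤ C t) :
    ((∀ᶠ t in atTop, 0 ≤ f t) ∨ ∀ᶠ t in atTop, f t ≤ 0) ∧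
      ((∀ᶠ t in atTop, 0 ≤ g t) ∨ ∀ᶠ t in atTop, g t ≤ 0) := by
  have invariant : ∀ {f g : ℝ → ℝ}, (∀ t ≥ t₀, HasDerivAt f (A t * f t + B t * g t) t) →
      (∀ t ≥ t₀, HasDerivAt g (C t * f t + D t * g t) t) →
      ∀ t₁ ≥ t₀, 0 ≤ f t₁ → 0 ≤ g t₁ → (∀ᶠ t in atTop, 0 ≤ f t) ∧ ∀ᶠ t in atTop, 0 ≤ g t := by
    intro f g hf hg t₁ ht₁ hf₁ hg₁
    have hsub : Ici t₁ ⊆ Ici t₀ := Ici_subset_Ici.2 ht₁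
    have h := cooperative_nonneg (fun t ht => hf t (ht₁.trans ht)) (fun t ht => hg t (ht₁.trans ht))
      (hA.mono hsub) (hB.mono hsub) (hC.mono hsub) (hD.mono hsub)
      (fun t ht => hB₀ t (ht₁.trans ht)) (fun t ht => hC₀ t (ht₁.trans ht)) hf₁ hg₁
    exact ⟨eventually_atTop.2 ⟨t₁, fun t ht => (h t ht).1⟩,
      eventually_atTop.2 ⟨t₁, fun t ht => (h t ht).2⟩⟩
  by_cases hpos : ∃ t₁ ≥ t₀, 0 ≤ f t₁ ∧ 0 ≤ g t₁
  · obtain ⟨t₁, ht₁, hf₁, hg₁⟩ := hpos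
    obtain ⟨hf', hg'⟩ := invariant hf hg t₁ ht₁ hf₁ hg₁
    exact ⟨.inl hf', .inl hg'⟩
  by_cases hneg : ∃ t₁ ≥ t₀, f t₁ ≤ 0 ∧ g t₁ ≤ 0
  · obtain ⟨t₁, ht₁, hf₁, hg₁⟩ := hneg
    obtain ⟨hf', hg'⟩ := invariant (f := -f) (g := -g)
      (fun t ht => (hf t ht).neg.congr_deriv (by simp only [Pi.neg_apply]; ring))
      (fun t ht => (hg t ht).neg.congr_deriv (by simp only [Pi.neg_apply]; ring))
      t₁ ht₁ (neg_nonneg.2 hf₁) (neg_nonneg.2 hg₁)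
    exact ⟨.inr (hf'.mono fun t h => neg_nonneg.1 h), .inr (hg'.mono fun t h => neg_nonneg.1 h)⟩
  push Not at hpos hneg
  have hfc : ContinuousOn f (Ici t₀) := fun t ht => (hf t ht).continuousAt.continuousWithinAt
  have hf_ne : ∀ t ∈ Ici t₀, f t ≠ 0 := fun t ht h =>
    (hpos t ht h.ge).not_gt (hneg t ht h.le)
  rcases le_total 0 (f t₀) with hf₀ | hf₀
  · have h := isPreconnected_Ici.nonneg_of_ne_zero hfc hf_ne self_mem_Ici hf₀
    exact ⟨.inl (eventually_atTop.2 ⟨t₀, h⟩),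
      .inr (eventually_atTop.2 ⟨t₀, fun t ht => (hpos t ht (h t ht)).le⟩)⟩
  · have h := isPreconnected_Ici.nonneg_of_ne_zero hfc.neg
      (fun t ht => neg_ne_zero.2 (hf_ne t ht)) self_mem_Ici (neg_nonneg.2 hf₀)
    exact ⟨.inr (eventually_atTop.2 ⟨t₀, fun t ht => neg_nonneg.1 (h t ht)⟩),
      .inl (eventually_atTop.2 ⟨t₀, fun t ht => (hneg t ht (neg_nonneg.1 (h t ht))).le⟩)⟩

lemma monotoneOn_of_forall_hasDerivAt_nonneg {f f' : ℝ → ℝ} {D : Set ℝ} (hD : Convex ℝ D)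
    (hf : ∀ t ∈ D, HasDerivAt f (f' t) t) (hf' : ∀ t ∈ D, 0 ≤ f' t) : MonotoneOn f D :=
  monotoneOn_of_hasDerivWithinAt_nonneg hD
    (fun t ht => (hf t ht).continuousAt.continuousWithinAt)
    (fun t ht => (hf t (interior_subset ht)).hasDerivWithinAt)
    (fun t ht => hf' t (interior_subset ht))

lemma tendsto_atBot_of_hasDerivAt_le_neg {f f' : ℝ → ℝ} {c : ℝ} (hc : 0 < c)
    (hf : ∀ᶠ t in atTop, HasDerivAt f (f' t) t ∧ f' t ≤ -c) : Tendsto f atTop atBot := by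
  obtain ⟨T, hT⟩ := eventually_atTop.1 hf
  have hmono : MonotoneOn (fun t => -f t - t * c) (Ici T) :=
    monotoneOn_of_forall_hasDerivAt_nonneg (convex_Ici T)
      (fun t ht => (hT t ht).1.neg.sub (hasDerivAt_mul_const c))
      (fun t ht => by linarith [(hT t ht).2])
  have hlin : Tendsto (fun t => (f T + c * T) + -c * t) atTop atBot :=
    tendsto_atBot_add_const_left _ _ (tendsto_id.const_mul_atTop_of_neg (neg_lt_zero.2 hc))
  refine tendsto_atBot_mono' _ ?_ hlin
  filter_upwards [eventually_ge_atTop T] with t ht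
  have := hmono self_mem_Ici ht ht
  simp only at this
  linarith

lemma nonneg_of_tendsto_of_hasDerivAt {f f' : ℝ → ℝ} {L c : ℝ}
    (hf : ∀ᶠ t in atTop, HasDerivAt f (f' t) t) (hL : Tendsto f atTop (𝓝 L))
    (hc : Tendsto f' atTop (𝓝 c)) : 0 ≤ c := by
  by_contra! hc₀
  have hf' : ∀ᶠ t in atTop, f' t < c / 2 := hc.eventually (gt_mem_nhds (by linarith))
  refine not_tendsto_atBot_of_tendsto_nhds hL (tendsto_atBot_of_hasDerivAt_le_neg
    (f' := f') (c := -(c / 2)) (by linarith) ?_)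
  filter_upwards [hf, hf'] with t h h' using ⟨h, by linarith⟩

theorem eq_zero_of_tendsto_of_hasDerivAt {f f' : ℝ → ℝ} {L c : ℝ}
    (hf : ∀ᶠ t in atTop, HasDerivAt f (f' t) t) (hL : Tendsto f atTop (𝓝 L))
    (hc : Tendsto f' atTop (𝓝 c)) : c = 0 := by
  have h := nonneg_of_tendsto_of_hasDerivAt (hf.mono fun t h => h.neg) hL.neg hc.neg
  linarith [nonneg_of_tendsto_of_hasDerivAt hf hL hc]

lemma eventually_le_of_hasDerivAt_le_neg {f f' : ℝ → ℝ} {m B c : ℝ} (hc : 0 < c)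
    (hf : ∀ᶠ t in atTop, HasDerivAt f (f' t) t) (hm : ∀ᶠ t in atTop, m ≤ f t)
    (hB : ∀ᶠ t in atTop, B ≤ f t → f' t ≤ -c) : ∀ᶠ t in atTop, f t ≤ B := by
  obtain ⟨T, hT⟩ := eventually_atTop.1 (hf.and hB)
  obtain ⟨t₁, ht₁, hft₁⟩ : ∃ t₁ ≥ T, f t₁ ≤ B := by
    by_contra! h
    have hbot := tendsto_atBot_of_hasDerivAt_le_neg hc (eventually_atTop.2
      ⟨T, fun t ht => ⟨(hT t ht).1, (hT t ht).2 (h t ht).le⟩⟩)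
    obtain ⟨t, hlt, hle⟩ := ((hbot.eventually_lt_atBot m).and hm).exists
    exact hlt.not_ge hle
  refine eventually_atTop.2 ⟨t₁, fun t ht => ?_⟩
  refine image_le_of_deriv_right_lt_deriv_boundary (B := fun _ => B) (B' := fun _ => 0)
    (fun x hx => (hT x (ht₁.trans hx.1)).1.continuousAt.continuousWithinAt)
    (fun x hx => (hT x (ht₁.trans hx.1)).1.hasDerivWithinAt) hft₁ (fun _ => hasDerivAt_const _ _)
    (fun x hx hfx => ?_) ⟨ht, le_rfl⟩
  linarith [(hT x (ht₁.trans hx.1)).2 hfx.ge]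

lemma exists_tendsto_of_hasDerivAt_nonneg {f f' : ℝ → ℝ} {M : ℝ}
    (hf : ∀ᶠ t in atTop, HasDerivAt f (f' t) t ∧ 0 ≤ f' t) (hM : ∀ᶠ t in atTop, f t ≤ M) :
    ∃ L, Tendsto f atTop (𝓝 L) := by
  obtain ⟨T, hT⟩ := eventually_atTop.1 (hf.and hM)
  have hmono := monotoneOn_of_forall_hasDerivAt_nonneg (convex_Ici T) (fun t ht => (hT t ht).1.1)
    (fun t ht => (hT t ht).1.2)
  have hg : Monotone fun t => f (max T t) := fun x y hxy =>
    hmono (le_max_left T x) (le_max_left T y) (max_le_max le_rfl hxy)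
  have hbdd : BddAbove (range fun t => f (max T t)) :=
    ⟨M, forall_mem_range.2 fun t => (hT _ (le_max_left T t)).2⟩
  refine ⟨_, (tendsto_atTop_ciSup hg hbdd).congr' ?_⟩
  filter_upwards [eventually_ge_atTop T] with t ht
  rw [max_eq_right ht]

theorem exists_tendsto_of_hasDerivAt_of_eventually_sign {f f' : ℝ → ℝ} {m M : ℝ}
    (hf : ∀ᶠ t in atTop, HasDerivAt f (f' t) t) (hm : ∀ᶠ t in atTop, m ≤ f t)
    (hM : ∀ᶠ t in atTop, f t ≤ M) (hsign : (∀ᶠ t in atTop, 0 ≤ f' t) ∨ ∀ᶠ t in atTop, f' t ≤ 0) :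
    ∃ L, Tendsto f atTop (𝓝 L) := by
  rcases hsign with hsign | hsign
  · exact exists_tendsto_of_hasDerivAt_nonneg (hf.and hsign) hM
  · obtain ⟨L, hL⟩ := exists_tendsto_of_hasDerivAt_nonneg (f := -f) (f' := -f') (M := -m)
      ((hf.and hsign).mono fun t h => ⟨h.1.neg, neg_nonneg.2 h.2⟩)
      (hm.mono fun t h => neg_le_neg h)
    exact ⟨-L, by simpa using hL.neg⟩

theorem pos_of_hasDerivAt_of_mul_le {f f' A : ℝ → ℝ} {t₀ : ℝ}
    (hf : ∀ t ≥ t₀, HasDerivAt f (f' t) t) (hA : ContinuousOn A (Ici t₀))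
    (hf' : ∀ t ≥ t₀, A t * f t ≤ f' t) (hnn : ∀ t ≥ t₀, 0 ≤ f t) (hf₀ : 0 < f t₀) :
    ∀ t ≥ t₀, 0 < f t := by
  intro t₁ ht₁
  obtain ⟨M, hM⟩ := isCompact_Icc.bddBelow_image (hA.mono (Icc_subset_Ici_self : Icc t₀ t₁ ⊆ _))
  have hmono : MonotoneOn (fun t => f t * Real.exp (-M * t)) (Icc t₀ t₁) := by
    refine monotoneOn_of_forall_hasDerivAt_nonneg (convex_Icc t₀ t₁)
      (fun t ht => (hf t ht.1).mul ((hasDerivAt_id' t).const_mul (-M)).exp) fun t ht => ?_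
    have hAM : M ≤ A t := hM (mem_image_of_mem A ht)
    have hAf : M * f t ≤ A t * f t := mul_le_mul_of_nonneg_right hAM (hnn t ht.1)
    have key : 0 ≤ (f' t - M * f t) * Real.exp (-M * t) :=
      mul_nonneg (by linarith [hf' t ht.1]) (Real.exp_pos _).le
    convert key using 1
    ring
  have h := hmono ⟨le_rfl, ht₁⟩ ⟨ht₁, le_rfl⟩ ht₁
  exact pos_of_mul_pos_left ((mul_pos hf₀ (Real.exp_pos _)).trans_le h) (Real.exp_pos _).le

namespace ReducedSystem

def fieldP (k1 k3 a x y : ℝ) : ℝ := k1 * y - k3 * x * y - a * x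

def fieldS (k1 k3 b x y : ℝ) : ℝ := b * x - k1 * y - k3 * x * y

/-- The system obeyed by `p` and `s = n r - p - 2 q`, with `a = κ₂ + κ₋₁` and
`b = (n - 1) κ₂ + κ₋₁`. -/
def IsSolution (k1 k3 a b : ℝ) (p s : ℝ → ℝ) : Prop :=
  ∀ t ≥ 0, HasDerivAt p (fieldP k1 k3 a (p t) (s t)) t ∧ HasDerivAt s (fieldS k1 k3 b (p t) (s t)) t

namespace IsSolution

variable {k1 k3 a b : ℝ} {p s : ℝ → ℝ}

lemma continuousOn_p (h : IsSolution k1 k3 a b p s) : ContinuousOn p (Ici 0) := fun t ht =>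
  (h t ht).1.continuousAt.continuousWithinAt

lemma continuousOn_s (h : IsSolution k1 k3 a b p s) : ContinuousOn s (Ici 0) := fun t ht =>
  (h t ht).2.continuousAt.continuousWithinAt

lemma nonneg (h : IsSolution k1 k3 a b p s) (hk1 : 0 ≤ k1) (hb : 0 ≤ b) (hp₀ : 0 ≤ p 0)
    (hs₀ : 0 ≤ s 0) : ∀ t ≥ 0, 0 ≤ p t ∧ 0 ≤ s t :=
  cooperative_nonneg (A := fun t => -(k3 * s t) - a) (B := fun _ => k1) (C := fun _ => b)
    (D := fun t => -k1 - k3 * p t)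
    (fun t ht => (h t ht).1.congr_deriv (by simp only [fieldP]; ring))
    (fun t ht => (h t ht).2.congr_deriv (by simp only [fieldS]; ring))
    ((continuousOn_const.mul h.continuousOn_s).neg.sub continuousOn_const) continuousOn_const
    continuousOn_const (continuousOn_const.sub (continuousOn_const.mul h.continuousOn_p))
    (fun _ _ => hk1) (fun _ _ => hb) hp₀ hs₀

lemma pos (h : IsSolution k1 k3 a b p s) (hk1 : 0 ≤ k1) (hb : 0 ≤ b) (hp₀ : 0 < p 0)
    (hs₀ : 0 ≤ s 0) : ∀ t ≥ 0, 0 < p t := by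
  have hnn := h.nonneg hk1 hb hp₀.le hs₀
  refine pos_of_hasDerivAt_of_mul_le (A := fun t => -(k3 * s t) - a) (fun t ht => (h t ht).1)
    ((continuousOn_const.mul h.continuousOn_s).neg.sub continuousOn_const) (fun t ht => ?_)
    (fun t ht => (hnn t ht).1) hp₀
  simp only [fieldP]
  nlinarith [mul_nonneg hk1 (hnn t ht).2]

lemma eventually_p_le (h : IsSolution k1 k3 a b p s) (hk1 : 0 < k1) (hk3 : 0 < k3) (ha : 0 < a)
    (hb : 0 ≤ b) (hp₀ : 0 ≤ p 0) (hs₀ : 0 ≤ s 0) : ∀ᶠ t in atTop, p t ≤ k1 / k3 := by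
  have hnn := h.nonneg hk1.le hb hp₀ hs₀
  refine eventually_le_of_hasDerivAt_le_neg (m := 0) (c := a * (k1 / k3)) (by positivity)
    ((eventually_ge_atTop 0).mono fun t ht => (h t ht).1)
    ((eventually_ge_atTop 0).mono fun t ht => (hnn t ht).1)
    ((eventually_ge_atTop 0).mono fun t ht hpt => ?_)
  have hk : k1 - k3 * p t ≤ 0 := by rw [div_le_iff₀ hk3] at hpt; linarith
  have := mul_nonpos_of_nonpos_of_nonneg hk (hnn t ht).2
  simp only [fieldP]
  nlinarith [mul_le_mul_of_nonneg_left hpt ha.le]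

lemma eventually_s_le (h : IsSolution k1 k3 a b p s) (hk1 : 0 < k1) (hk3 : 0 < k3)
    (hb : 0 < b) (hp₀ : 0 ≤ p 0) (hs₀ : 0 ≤ s 0) : ∀ᶠ t in atTop, s t ≤ b / k3 := by
  have hnn := h.nonneg hk1.le hb.le hp₀ hs₀
  refine eventually_le_of_hasDerivAt_le_neg (m := 0) (c := k1 * (b / k3)) (by positivity)
    ((eventually_ge_atTop 0).mono fun t ht => (h t ht).2)
    ((eventually_ge_atTop 0).mono fun t ht => (hnn t ht).2)
    ((eventually_ge_atTop 0).mono fun t ht hst => ?_)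
  have hk : b - k3 * s t ≤ 0 := by rw [div_le_iff₀ hk3] at hst; linarith
  have := mul_nonpos_of_nonneg_of_nonpos (hnn t ht).1 hk
  simp only [fieldS]
  nlinarith [mul_le_mul_of_nonneg_left hst hk1.le]

lemma hasDerivAt_fieldP (h : IsSolution k1 k3 a b p s) {t : ℝ} (ht : t ≥ 0) :
    HasDerivAt (fun t => fieldP k1 k3 a (p t) (s t))
      ((-(k3 * s t) - a) * fieldP k1 k3 a (p t) (s t) +
        (k1 - k3 * p t) * fieldS k1 k3 b (p t) (s t)) t :=
  have ⟨hp, hs⟩ := h t ht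
  ((hs.const_mul k1).sub ((hp.const_mul k3).mul hs)).sub (hp.const_mul a)
    |>.congr_deriv (by simp only [fieldP, fieldS]; ring)

lemma hasDerivAt_fieldS (h : IsSolution k1 k3 a b p s) {t : ℝ} (ht : t ≥ 0) :
    HasDerivAt (fun t => fieldS k1 k3 b (p t) (s t))
      ((b - k3 * s t) * fieldP k1 k3 a (p t) (s t) +
        (-k1 - k3 * p t) * fieldS k1 k3 b (p t) (s t)) t :=
  have ⟨hp, hs⟩ := h t ht
  ((hp.const_mul b).sub (hs.const_mul k1)).sub ((hp.const_mul k3).mul hs)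
    |>.congr_deriv (by simp only [fieldP, fieldS]; ring)

/-- Once `p ≤ k1 / k3` and `s ≤ b / k3`, the derivatives `(p', s')` solve a cooperative linear
system, so each of them eventually keeps a sign. -/
lemma exists_tendsto (h : IsSolution k1 k3 a b p s) (hk1 : 0 < k1) (hk3 : 0 < k3) (ha : 0 < a)
    (hb : 0 < b) (hp₀ : 0 ≤ p 0) (hs₀ : 0 ≤ s 0) :
    (∃ P, Tendsto p atTop (𝓝 P)) ∧ ∃ S, Tendsto s atTop (𝓝 S) := by
  have hnn := h.nonneg hk1.le hb.le hp₀ hs₀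
  have hple := h.eventually_p_le hk1 hk3 ha hb.le hp₀ hs₀
  have hsle := h.eventually_s_le hk1 hk3 hb hp₀ hs₀
  obtain ⟨T, hT⟩ := eventually_atTop.1 ((eventually_ge_atTop 0).and (hple.and hsle))
  have hsub : Ici T ⊆ Ici 0 := Ici_subset_Ici.2 (hT T le_rfl).1
  have hpc := h.continuousOn_p.mono hsub
  have hsc := h.continuousOn_s.mono hsub
  obtain ⟨hsign_p, hsign_s⟩ := cooperative_eventually_sign (t₀ := T)
    (fun t ht => h.hasDerivAt_fieldP (hT t ht).1) (fun t ht => h.hasDerivAt_fieldS (hT t ht).1)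
    ((continuousOn_const.mul hsc).neg.sub continuousOn_const)
    (continuousOn_const.sub (continuousOn_const.mul hpc))
    (continuousOn_const.sub (continuousOn_const.mul hsc))
    (continuousOn_const.sub (continuousOn_const.mul hpc))
    (fun t ht => by have := (hT t ht).2.1; rw [le_div_iff₀ hk3] at this; linarith)
    (fun t ht => by have := (hT t ht).2.2; rw [le_div_iff₀ hk3] at this; linarith)
  have hev := eventually_ge_atTop (0 : ℝ)
  exact ⟨exists_tendsto_of_hasDerivAt_of_eventually_sign (hev.mono fun t ht => (h t ht).1)
      (hev.mono fun t ht => (hnn t ht).1) hple hsign_p,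
    exists_tendsto_of_hasDerivAt_of_eventually_sign (hev.mono fun t ht => (h t ht).2)
      (hev.mono fun t ht => (hnn t ht).2) hsle hsign_s⟩

lemma fieldP_fieldS_eq_zero_of_tendsto (h : IsSolution k1 k3 a b p s) {P S : ℝ}
    (hP : Tendsto p atTop (𝓝 P)) (hS : Tendsto s atTop (𝓝 S)) :
    fieldP k1 k3 a P S = 0 ∧ fieldS k1 k3 b P S = 0 := by
  have hev := eventually_ge_atTop (0 : ℝ)
  exact ⟨eq_zero_of_tendsto_of_hasDerivAt (hev.mono fun t ht => (h t ht).1) hP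
      (((hS.const_mul k1).sub ((hP.const_mul k3).mul hS)).sub (hP.const_mul a)),
    eq_zero_of_tendsto_of_hasDerivAt (hev.mono fun t ht => (h t ht).2) hS
      (((hP.const_mul b).sub (hS.const_mul k1)).sub ((hP.const_mul k3).mul hS))⟩

/-- For `a < b` the origin is a saddle: near it, `(a + b) p + 2 a s` is nondecreasing along
solutions in the positive quadrant, so a solution with `p > 0` cannot converge to it. -/
lemma not_tendsto_zero (h : IsSolution k1 k3 a b p s) (hk1 : 0 < k1) (hk3 : 0 < k3)
    (ha : 0 < a) (hab : a < b) (hp₀ : 0 < p 0) (hs₀ : 0 ≤ s 0)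
    (hP : Tendsto p atTop (𝓝 0)) (hS : Tendsto s atTop (𝓝 0)) : False := by
  have hb : 0 < b := ha.trans hab
  have hnn := h.nonneg hk1.le hb.le hp₀.le hs₀
  have hpos := h.pos hk1.le hb.le hp₀ hs₀
  obtain ⟨δ, hδ₀, hδ⟩ : ∃ δ > 0, k3 * (3 * a + b) * δ = a * (b - a) :=
    ⟨_, div_pos (by nlinarith) (by positivity), mul_div_cancel₀ _ (by positivity)⟩
  have hsδ : ∀ᶠ t in atTop, s t < δ := hS.eventually (gt_mem_nhds hδ₀)
  obtain ⟨T, hT⟩ := eventually_atTop.1 ((eventually_ge_atTop 0).and hsδ)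
  have hmono : MonotoneOn (fun t => (a + b) * p t + 2 * a * s t) (Ici T) := by
    refine monotoneOn_of_forall_hasDerivAt_nonneg (convex_Ici T) (fun t ht =>
      ((h t (hT t ht).1).1.const_mul (a + b)).add ((h t (hT t ht).1).2.const_mul (2 * a)))
      fun t ht => ?_
    obtain ⟨hp, hs⟩ := hnn t (hT t ht).1
    have hps : k3 * (3 * a + b) * (p t * s t) ≤ a * (b - a) * p t :=
      calc k3 * (3 * a + b) * (p t * s t) ≤ k3 * (3 * a + b) * (p t * δ) := by
            gcongr; exact (hT t ht).2.le
        _ = a * (b - a) * p t := by rw [← hδ]; ring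
    simp only [fieldP, fieldS]
    nlinarith [mul_nonneg hk1.le hs]
  have hW : Tendsto (fun t => (a + b) * p t + 2 * a * s t) atTop (𝓝 0) := by
    simpa using (hP.const_mul (a + b)).add (hS.const_mul (2 * a))
  have hWT : (a + b) * p T + 2 * a * s T ≤ 0 :=
    ge_of_tendsto hW ((eventually_ge_atTop T).mono fun t ht => hmono self_mem_Ici ht ht)
  nlinarith [hpos T (hT T le_rfl).1, (hnn T (hT T le_rfl).1).2]

theorem tendsto (h : IsSolution k1 k3 a b p s) (hk1 : 0 < k1) (hk3 : 0 < k3) (ha : 0 < a)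
    (hab : a < b) (hp₀ : 0 < p 0) (hs₀ : 0 ≤ s 0) {σ : ℝ} (hσ : 2 * k3 * σ = b - a) :
    Tendsto p atTop (𝓝 (k1 * σ / (a + k3 * σ))) ∧ Tendsto s atTop (𝓝 σ) := by
  obtain ⟨⟨P, hP⟩, ⟨S, hS⟩⟩ := h.exists_tendsto hk1 hk3 ha (ha.trans hab) hp₀.le hs₀
  obtain ⟨hfp, hfs⟩ := h.fieldP_fieldS_eq_zero_of_tendsto hP hS
  simp only [fieldP, fieldS] at hfp hfs
  have hP₀ : P ≠ 0 := by
    rintro rfl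
    have hS₀ : S = 0 := by simpa [hk1.ne'] using hfs
    exact h.not_tendsto_zero hk1 hk3 ha hab hp₀ hs₀ hP (hS₀ ▸ hS)
  have hSσ : S = σ := by
    have : P * (b - a - 2 * k3 * S) = 0 := by linear_combination hfp + hfs
    have := (mul_eq_zero.1 this).resolve_left hP₀
    nlinarith
  have hPσ : P = k1 * σ / (a + k3 * σ) := by
    have : 0 < a + k3 * σ := by nlinarith
    rw [eq_div_iff this.ne', ← hSσ]
    linear_combination -hfp
  exact ⟨hPσ ▸ hP, hSσ ▸ hS⟩

end IsSolution

end ReducedSystem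

theorem stmt_15_general (n : ℕ) (hn : 3 ≤ n) (k1 k2 k3 km1 : ℝ)
    (hk1 : 0 < k1) (hk2 : 0 < k2) (hk3 : 0 < k3) (hkm1 : 0 < km1)
    (p0 q0 r0 : ℝ) (hp0 : 0 < p0)
    (hadm1 : 0 ≤ (n : ℝ) * r0 - p0 - 2 * q0)
    (p q r : ℝ → ℝ)
    (hinit : p 0 = p0 ∧ q 0 = q0 ∧ r 0 = r0)
    (hode : ∀ t, 0 ≤ t →
      HasDerivAt p ((k1 - k3 * p t) * ((n : ℝ) * r t - p t - 2 * q t)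
        - (k2 + km1) * p t) t ∧
      HasDerivAt q (k2 * p t + k3 * p t * ((n : ℝ) * r t - p t - 2 * q t)) t ∧
      HasDerivAt r (k2 * p t) t)
    (sinf pinf : ℝ)
    (hsinf : sinf = ((n : ℝ) - 2) * k2 / (2 * k3))
    (hpinf : pinf = k1 * sinf / (k2 + km1 + k3 * sinf)) :
    Filter.Tendsto (fun t => p t) Filter.atTop (nhds pinf) ∧
    Filter.Tendsto (fun t => (n : ℝ) * r t - p t - 2 * q t) Filter.atTop (nhds sinf) := by
  obtain ⟨hp₀, hq₀, hr₀⟩ := hinit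
  have hn' : (3 : ℝ) ≤ n := by exact_mod_cast hn
  have hsol : ReducedSystem.IsSolution k1 k3 (k2 + km1) ((n - 1) * k2 + km1) p
      (fun t => (n : ℝ) * r t - p t - 2 * q t) := fun t ht =>
    have ⟨hp, hq, hr⟩ := hode t ht
    ⟨hp.congr_deriv (by simp only [ReducedSystem.fieldP]; ring),
      (((hr.const_mul (n : ℝ)).sub hp).sub (hq.const_mul 2)).congr_deriv
        (by simp only [ReducedSystem.fieldS]; ring)⟩
  have hσ : 2 * k3 * sinf = (n - 1) * k2 + km1 - (k2 + km1) := by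
    rw [hsinf]; field_simp; ring
  rw [hpinf]
  exact hsol.tendsto hk1 hk3 (by positivity) (by nlinarith) (hp₀ ▸ hp0)
    (by simpa only [hp₀, hq₀, hr₀] using hadm1) hσ

/-- Case `κ₋ = 0`: convergence of `p(t)` and `s(t) = n r(t) - p(t) - 2 q(t)` as `t → ∞`. -/
theorem stmt_15 (n : ℕ) (hn : 3 ≤ n) (k1 k2 k3 km1 : ℝ)
    (hk1 : 0 < k1) (hk2 : 0 < k2) (hk3 : 0 < k3) (hkm1 : 0 < km1)
    (p0 q0 r0 : ℝ) (hp0 : 0 < p0) (hq0 : 0 < q0) (hr0 : 0 < r0)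
    (hadm1 : 0 ≤ (n : ℝ) * r0 - p0 - 2 * q0) (hadm2 : r0 ≤ q0)
    (p q r : ℝ → ℝ)
    (hinit : p 0 = p0 ∧ q 0 = q0 ∧ r 0 = r0)
    (hode : ∀ t, 0 ≤ t →
      HasDerivAt p ((k1 - k3 * p t) * ((n : ℝ) * r t - p t - 2 * q t)
        - (k2 + km1) * p t) t ∧
      HasDerivAt q (k2 * p t + k3 * p t * ((n : ℝ) * r t - p t - 2 * q t)) t ∧
      HasDerivAt r (k2 * p t) t)
    (sinf pinf : ℝ)
    (hsinf : sinf = ((n : ℝ) - 2) * k2 / (2 * k3))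
    (hpinf : pinf = k1 * sinf / (k2 + km1 + k3 * sinf)) :
    Filter.Tendsto (fun t => p t) Filter.atTop (nhds pinf) ∧
    Filter.Tendsto (fun t => (n : ℝ) * r t - p t - 2 * q t) Filter.atTop (nhds sinf) :=
  stmt_15_general n hn k1 k2 k3 km1 hk1 hk2 hk3 hkm1 p0 q0 r0 hp0 hadm1 p q r hinit hode sinf pinf
    hsinf hpinf
end
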